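/- arXiv:2401.09788 — 6 statements merged into one kernel-verified Lean document; each statement's English description precedes it below -/
import Mathlib

section
/- Newton–MacLaurin inequality: if κ ∈ ℝⁿ lies in the Garding cone Γ_k⁺ = {x : E_i(x) > 0 for i = 1,...,k}, then for all 1 ≤ l ≤ k, E_{k+1}(κ) E_{l−1}(κ) ≤ E_l(κ) E_k(κ), with equality if and only if κ_1 = κ_2 = ⋯ = κ_n. -/
/-!
By Rolle's theorem the derivative of `∏ (X - aᵢ)` again has only real roots, and by Vieta
these roots have the same normalized elementary symmetric means `E_j` as the `aᵢ` for `j < n`.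
Iterating reduces Newton's inequality `E_m E_{m+2} ≤ E_{m+1}²` to multisets of size `m + 2`,
where passing to reciprocals turns it into `E₂ ≤ E₁²`, the nonnegativity of a variance.
On `Γ_k⁺` Newton's inequalities make the ratios `E_{j+1} / E_j` decrease for `j ≤ k`, which
gives the Newton–MacLaurin inequality; equality in it forces `E_{k-1} E_{k+1} = E_k²`, hence,
through the same reductions, a vanishing variance.
-/

open scoped BigOperators

/-- The normalized `k`-th elementary symmetric function on `ℝⁿ`:
`E_k(κ) = (n choose k)⁻¹ ∑_{i₁<⋯<i_k} κ_{i₁}⋯κ_{i_k}`, with `E_0 = 1`. -/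
noncomputable def Ev (n k : ℕ) (κ : Fin n → ℝ) : ℝ :=
  ((n.choose k : ℝ))⁻¹ *
    ∑ s ∈ Finset.powersetCard k (Finset.univ : Finset (Fin n)), ∏ i ∈ s, κ i

namespace Multiset

section CommSemiring

variable {R : Type*} [CommSemiring R]

@[simp]
lemma esymm_zero (s : Multiset R) : s.esymm 0 = 1 := by
  simp [esymm]

lemma esymm_one (s : Multiset R) : s.esymm 1 = s.sum := by
  simp [esymm, powersetCard_one]

lemma esymm_card (s : Multiset R) : s.esymm (card s) = s.prod := by
  simp [esymm, powersetCard_self]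

lemma esymm_eq_zero_of_card_lt (s : Multiset R) {k : ℕ} (hk : card s < k) : s.esymm k = 0 := by
  simp [esymm, powersetCard_eq_empty _ hk]

lemma esymm_cons_succ (a : R) (s : Multiset R) (k : ℕ) :
    (a ::ₘ s).esymm (k + 1) = s.esymm (k + 1) + a * s.esymm k := by
  simp [esymm, powersetCard_cons, map_map, ← sum_map_mul_left]

lemma esymm_replicate (n k : ℕ) (c : R) : (replicate n c).esymm k = n.choose k * c ^ k := by
  induction n generalizing k with
  | zero => cases k <;> simp [esymm_eq_zero_of_card_lt 0 (Nat.succ_pos _)]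
  | succ n ih =>
    cases k with
    | zero => simp
    | succ k =>
      rw [replicate_succ, esymm_cons_succ, ih, ih, Nat.choose_succ_succ]
      push_cast
      ring

end CommSemiring

lemma two_mul_esymm_two {R : Type*} [CommRing R] (s : Multiset R) :
    2 * s.esymm 2 = s.sum ^ 2 - (s.map (· ^ 2)).sum := by
  induction s using Multiset.induction_on with
  | empty => simp [esymm_eq_zero_of_card_lt (0 : Multiset R) (by simp : card 0 < 2)]
  | cons a s ih =>
    rw [esymm_cons_succ, esymm_one, sum_cons, map_cons, sum_cons]
    linear_combination ih

lemma sum_map_sub_sq {R : Type*} [CommRing R] (s : Multiset R) (c : R) :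
    (s.map fun a => (a - c) ^ 2).sum = (s.map (· ^ 2)).sum - 2 * c * s.sum + card s * c ^ 2 := by
  induction s using Multiset.induction_on with
  | empty => simp
  | cons a s ih =>
    simp only [map_cons, sum_cons, card_cons, ih]
    push_cast
    ring

section Field

variable {K : Type*} [Field K]

lemma prod_mul_esymm_map_inv (s : Multiset K) (hs : (0 : K) ∉ s) {i j : ℕ}
    (hij : i + j = card s) : s.prod * (s.map (·⁻¹)).esymm j = s.esymm i := by
  induction s using Multiset.induction_on generalizing i j with
  | empty =>
    obtain ⟨rfl, rfl⟩ : i = 0 ∧ j = 0 := by simpa using hij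
    simp
  | cons a s ih =>
    have ha : a ≠ 0 := fun h => hs (h ▸ mem_cons_self a s)
    have hs' : (0 : K) ∉ s := fun h => hs (mem_cons_of_mem h)
    rw [card_cons] at hij
    rcases j with _ | j
    · rw [show i = card (a ::ₘ s) by simp; omega, esymm_card]
      simp
    rw [prod_cons, map_cons, esymm_cons_succ]
    rcases i with _ | i
    · rw [esymm_eq_zero_of_card_lt _ (by simp; omega), esymm_zero, ← esymm_zero s,
        ← ih hs' (i := 0) (j := j) (by omega), zero_add, mul_mul_mul_comm, mul_inv_cancel₀ ha,
        one_mul]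
    · rw [esymm_cons_succ, ← ih hs' (i := i + 1) (j := j) (by omega),
        ← ih hs' (i := i) (j := j + 1) (by omega)]
      field_simp
      ring

noncomputable def esymmMean (s : Multiset K) (k : ℕ) : K :=
  ((card s).choose k : K)⁻¹ * s.esymm k

@[simp]
lemma esymmMean_zero (s : Multiset K) : s.esymmMean 0 = 1 := by
  simp [esymmMean]

lemma esymmMean_one (s : Multiset K) : s.esymmMean 1 = s.sum / card s := by
  simp [esymmMean, esymm_one, div_eq_inv_mul]

lemma esymmMean_card (s : Multiset K) : s.esymmMean (card s) = s.prod := by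
  simp [esymmMean, esymm_card]

lemma esymmMean_replicate [CharZero K] {n k : ℕ} (hk : k ≤ n) (c : K) :
    (replicate n c).esymmMean k = c ^ k := by
  have : (n.choose k : K) ≠ 0 := Nat.cast_ne_zero.mpr (Nat.choose_pos hk).ne'
  simp [esymmMean, esymm_replicate, this]

lemma esymmMean_eq_prod_mul_esymmMean_map_inv (s : Multiset K) (hs : (0 : K) ∉ s) {i j : ℕ}
    (hij : i + j = card s) : s.esymmMean i = s.prod * (s.map (·⁻¹)).esymmMean j := by
  rw [esymmMean, esymmMean, card_map, ← prod_mul_esymm_map_inv s hs hij,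
    Nat.choose_symm_of_eq_add hij.symm]
  ring

lemma esymmMean_one_sq_sub_esymmMean_two [CharZero K] (s : Multiset K) (hs : 2 ≤ card s) :
    s.esymmMean 1 ^ 2 - s.esymmMean 2 =
      (s.map fun a => (a - s.esymmMean 1) ^ 2).sum / (card s * (card s - 1)) := by
  have hn : (card s : K) ≠ 0 := Nat.cast_ne_zero.mpr (by omega)
  have hn1 : (card s : K) - 1 ≠ 0 := by
    rw [sub_ne_zero, ← Nat.cast_one, Ne, Nat.cast_inj]; omega
  rw [sum_map_sub_sq, esymmMean_one, esymmMean, Nat.cast_choose_two]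
  field_simp
  linear_combination (-card s : K) * two_mul_esymm_two s

lemma esymmMean_eq_pow_of_forall_eq [CharZero K] {s : Multiset K} {c : K} (hc : ∀ a ∈ s, a = c)
    {k : ℕ} (hk : k ≤ card s) : s.esymmMean k = c ^ k := by
  rw [eq_replicate_card.mpr hc]
  exact esymmMean_replicate hk c

lemma esymmMean_sq_sub_mul_of_card_eq (s : Multiset K) (hs : (0 : K) ∉ s) {m : ℕ}
    (hm : card s = m + 2) :
    s.esymmMean (m + 1) ^ 2 - s.esymmMean m * s.esymmMean (m + 2) =
      s.prod ^ 2 * ((s.map (·⁻¹)).esymmMean 1 ^ 2 - (s.map (·⁻¹)).esymmMean 2) := by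
  rw [esymmMean_eq_prod_mul_esymmMean_map_inv s hs (i := m + 1) (j := 1) (by omega),
    esymmMean_eq_prod_mul_esymmMean_map_inv s hs (i := m) (j := 2) (by omega),
    ← hm, esymmMean_card]
  ring

open Polynomial in
lemma card_mul_esymm_roots_derivative [CharZero K] (s : Multiset K)
    (hroots : card (derivative (s.map fun a => X - C a).prod).roots = card s - 1)
    {j : ℕ} (hj : j < card s) :
    (card s : K) * (derivative (s.map fun a => X - C a).prod).roots.esymm j =
      ((card s - j : ℕ) : K) * s.esymm j := by
  set p := (s.map fun a => X - C a).prod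
  have hp : p.Monic := monic_multiset_prod_of_monic _ _ fun a _ => monic_X_sub_C a
  have hdeg : p.natDegree = card s := natDegree_multiset_prod_X_sub_C_eq_card s
  have hvieta := coeff_eq_esymm_roots_of_card (p := derivative p)
    (by rw [hroots, natDegree_derivative, hdeg]) (k := card s - 1 - j)
    (by rw [natDegree_derivative, hdeg]; omega)
  rw [coeff_derivative, show card s - 1 - j + 1 = card s - j by omega,
    prod_X_sub_C_coeff s (by omega), leadingCoeff_derivative, hp.leadingCoeff, hdeg,
    natDegree_derivative, hdeg, show card s - (card s - j) = j by omega,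
    show card s - 1 - (card s - 1 - j) = j by omega] at hvieta
  have hsign : ((-1 : K) ^ j) ≠ 0 := pow_ne_zero _ (neg_ne_zero.mpr one_ne_zero)
  apply mul_left_cancel₀ hsign
  rw [Nat.cast_sub hj.le]
  rw [Nat.cast_sub (by omega), Nat.cast_sub (by omega)] at hvieta
  push_cast at hvieta
  linear_combination -hvieta

end Field

section Real

lemma esymmMean_two_le_sq (s : Multiset ℝ) (hs : 2 ≤ card s) :
    s.esymmMean 2 ≤ s.esymmMean 1 ^ 2 := by
  have hn : (1 : ℝ) < card s := by exact_mod_cast hs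
  have hvar : 0 ≤ (s.map fun a => (a - s.esymmMean 1) ^ 2).sum :=
    sum_nonneg fun x hx => by obtain ⟨a, -, rfl⟩ := mem_map.mp hx; positivity
  have hquot := div_nonneg hvar
    (mul_nonneg (by linarith) (by linarith) : (0 : ℝ) ≤ card s * (card s - 1))
  linarith [esymmMean_one_sq_sub_esymmMean_two s hs]

lemma forall_eq_esymmMean_one_of_esymmMean_two_eq_sq (s : Multiset ℝ) (hs : 2 ≤ card s)
    (h : s.esymmMean 2 = s.esymmMean 1 ^ 2) : ∀ a ∈ s, a = s.esymmMean 1 := by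
  have hn : (1 : ℝ) < card s := by exact_mod_cast hs
  have hvar : (s.map fun a => (a - s.esymmMean 1) ^ 2).sum = 0 := by
    have := esymmMean_one_sq_sub_esymmMean_two s hs
    rw [h, sub_self, eq_comm, div_eq_zero_iff] at this
    exact this.resolve_right (mul_pos (by linarith) (by linarith)).ne'
  intro a ha
  have := all_zero_of_le_zero_le_of_sum_eq_zero
    (fun x hx => by obtain ⟨b, -, rfl⟩ := mem_map.mp hx; positivity) hvar _
    (mem_map_of_mem _ ha)
  simpa [sub_eq_zero] using this

lemma esymmMean_mul_le_sq_of_card_eq (s : Multiset ℝ) {m : ℕ} (hm : card s = m + 2) :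
    s.esymmMean m * s.esymmMean (m + 2) ≤ s.esymmMean (m + 1) ^ 2 := by
  by_cases hs : (0 : ℝ) ∈ s
  · rw [← hm, esymmMean_card, prod_eq_zero hs, mul_zero]
    positivity
  · have := esymmMean_sq_sub_mul_of_card_eq s hs hm
    have := esymmMean_two_le_sq (s.map (·⁻¹)) (by simp [hm])
    nlinarith [sq_nonneg s.prod]

lemma exists_forall_eq_of_esymmMean_mul_eq_sq_of_card_eq (s : Multiset ℝ) {m : ℕ}
    (hm : card s = m + 2) (hne : s.esymmMean (m + 2) ≠ 0)
    (h : s.esymmMean m * s.esymmMean (m + 2) = s.esymmMean (m + 1) ^ 2) :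
    ∃ c, ∀ a ∈ s, a = c := by
  have hprod : s.prod ≠ 0 := by rwa [← hm, esymmMean_card] at hne
  have hs : (0 : ℝ) ∉ s := fun h0 => hprod (prod_eq_zero h0)
  have hdefect := esymmMean_sq_sub_mul_of_card_eq s hs hm
  rw [h, sub_self, eq_comm, mul_eq_zero, sub_eq_zero] at hdefect
  have hinv := forall_eq_esymmMean_one_of_esymmMean_two_eq_sq (s.map (·⁻¹)) (by simp [hm])
    (hdefect.resolve_left (pow_ne_zero 2 hprod)).symm
  refine ⟨((s.map (·⁻¹)).esymmMean 1)⁻¹, fun a ha => ?_⟩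
  rw [← hinv _ (mem_map_of_mem _ ha), inv_inv]

open Polynomial in
lemma card_roots_derivative_prod_X_sub_C (s : Multiset ℝ) :
    card (derivative (s.map fun a => X - C a).prod).roots = card s - 1 := by
  apply le_antisymm
  · calc _ ≤ (derivative (s.map fun a => X - C a).prod).natDegree := card_roots' _
      _ = card s - 1 := by rw [natDegree_derivative, natDegree_multiset_prod_X_sub_C_eq_card]
  · have := card_roots_le_derivative (s.map fun a => X - C a).prod
    rw [roots_multiset_prod_X_sub_C] at this
    omega

open Polynomial in
lemma exists_card_pred_esymmMean_eq (s : Multiset ℝ) :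
    ∃ t : Multiset ℝ, card t = card s - 1 ∧
      ∀ j ≤ card t, t.esymmMean j = s.esymmMean j := by
  set t := (derivative (s.map fun a => X - C a).prod).roots
  have ht : card t = card s - 1 := card_roots_derivative_prod_X_sub_C s
  refine ⟨t, ht, fun j hj => ?_⟩
  rcases Nat.eq_zero_or_pos j with rfl | hj0
  · simp
  have hjs : j < card s := by omega
  have hesymm : (card s : ℝ) * t.esymm j = ((card s - j : ℕ) : ℝ) * s.esymm j :=
    card_mul_esymm_roots_derivative s ht hjs
  have hchoose := Nat.choose_mul_succ_eq (card s - 1) j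
  rw [Nat.sub_add_cancel (by omega)] at hchoose
  replace hchoose := congrArg (Nat.cast (R := ℝ)) hchoose
  push_cast at hchoose
  have hc₁ : ((card s).choose j : ℝ) ≠ 0 := Nat.cast_ne_zero.mpr (Nat.choose_pos hjs.le).ne'
  have hc₂ : ((card s - 1).choose j : ℝ) ≠ 0 :=
    Nat.cast_ne_zero.mpr (Nat.choose_pos (by omega)).ne'
  have hn : (card s : ℝ) ≠ 0 := Nat.cast_ne_zero.mpr (by omega)
  rw [esymmMean, esymmMean, ht]
  field_simp
  apply mul_left_cancel₀ hn
  linear_combination ((card s).choose j : ℝ) * hesymm - s.esymm j * hchoose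

lemma exists_card_eq_esymmMean_eq (s : Multiset ℝ) {r : ℕ} (hr : r ≤ card s) :
    ∃ t : Multiset ℝ, card t = r ∧ ∀ j ≤ r, t.esymmMean j = s.esymmMean j := by
  obtain ⟨d, hd⟩ := Nat.exists_eq_add_of_le hr
  induction d generalizing s with
  | zero => exact ⟨s, hd, fun _ _ => rfl⟩
  | succ d ih =>
    obtain ⟨t, ht, hts⟩ := exists_card_pred_esymmMean_eq s
    obtain ⟨u, hu, hut⟩ := ih t (by omega) (by omega)
    exact ⟨u, hu, fun j hj => (hut j hj).trans (hts j (by omega))⟩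

theorem esymmMean_mul_le_sq (s : Multiset ℝ) {m : ℕ} (hm : m + 2 ≤ card s) :
    s.esymmMean m * s.esymmMean (m + 2) ≤ s.esymmMean (m + 1) ^ 2 := by
  obtain ⟨t, ht, hts⟩ := exists_card_eq_esymmMean_eq s hm
  rw [← hts m (by omega), ← hts (m + 1) (by omega), ← hts (m + 2) le_rfl]
  exact esymmMean_mul_le_sq_of_card_eq t ht

theorem exists_forall_eq_of_esymmMean_mul_eq_sq (s : Multiset ℝ) {m : ℕ} (hm : m + 2 ≤ card s)
    (hne : s.esymmMean (m + 2) ≠ 0)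
    (h : s.esymmMean m * s.esymmMean (m + 2) = s.esymmMean (m + 1) ^ 2) :
    ∃ c, ∀ a ∈ s, a = c := by
  obtain ⟨t, ht, hts⟩ := exists_card_eq_esymmMean_eq s hm
  rw [← hts m (by omega), ← hts (m + 1) (by omega), ← hts (m + 2) le_rfl] at h
  rw [← hts (m + 2) le_rfl] at hne
  obtain ⟨c, hc⟩ := exists_forall_eq_of_esymmMean_mul_eq_sq_of_card_eq t ht hne h
  refine ⟨_, forall_eq_esymmMean_one_of_esymmMean_two_eq_sq s (by omega) ?_⟩
  rw [← hts 1 (by omega), ← hts 2 (by omega), esymmMean_eq_pow_of_forall_eq hc (by omega),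
    esymmMean_eq_pow_of_forall_eq hc (by omega), pow_one]

end Real

end Multiset

lemma antitoneOn_div_of_mul_le_sq {e : ℕ → ℝ} {k : ℕ} (hpos : ∀ j ≤ k, 0 < e j)
    (hconc : ∀ j, j + 1 ≤ k → e j * e (j + 2) ≤ e (j + 1) ^ 2) :
    AntitoneOn (fun j => e (j + 1) / e j) (Set.Iic k) := by
  refine antitoneOn_of_succ_le Set.ordConnected_Iic fun j _ _ hj => ?_
  rw [Order.succ_eq_add_one, Set.mem_Iic] at hj
  rw [Order.succ_eq_add_one, div_le_div_iff₀ (hpos _ hj) (hpos _ (by omega))]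
  nlinarith [hconc j hj]

lemma mul_le_mul_of_mul_le_sq {e : ℕ → ℝ} {k l : ℕ} (hpos : ∀ j ≤ k, 0 < e j)
    (hconc : ∀ j, j + 1 ≤ k → e j * e (j + 2) ≤ e (j + 1) ^ 2) (hl : l ≤ k) :
    e (k + 1) * e l ≤ e (l + 1) * e k := by
  have := antitoneOn_div_of_mul_le_sq hpos hconc (Set.mem_Iic.mpr hl) (Set.mem_Iic.mpr le_rfl) hl
  rwa [div_le_div_iff₀ (hpos k le_rfl) (hpos l hl)] at this

lemma mul_eq_sq_of_mul_eq_mul {e : ℕ → ℝ} {k l : ℕ} (hpos : ∀ j ≤ k + 1, 0 < e j)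
    (hconc : ∀ j, j + 1 ≤ k + 1 → e j * e (j + 2) ≤ e (j + 1) ^ 2) (hl : l ≤ k)
    (h : e (k + 2) * e l = e (l + 1) * e (k + 1)) : e k * e (k + 2) = e (k + 1) ^ 2 := by
  have hanti := antitoneOn_div_of_mul_le_sq hpos hconc
  have hpos' : ∀ j ≤ k, 0 < e j := fun j hj => hpos j (by omega)
  have hlast : e (k + 2) / e (k + 1) ≤ e (k + 1) / e k :=
    hanti (Set.mem_Iic.mpr (by omega)) (Set.mem_Iic.mpr le_rfl) (by omega)
  have hfirst : e (k + 1) / e k ≤ e (l + 1) / e l :=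
    hanti (Set.mem_Iic.mpr (by omega)) (Set.mem_Iic.mpr (by omega)) hl
  have houter : e (k + 2) / e (k + 1) = e (l + 1) / e l := by
    rw [div_eq_div_iff (hpos _ le_rfl).ne' (hpos' l hl).ne', h]
  have := le_antisymm hlast (houter ▸ hfirst)
  rw [div_eq_div_iff (hpos _ le_rfl).ne' (hpos' k le_rfl).ne'] at this
  linear_combination this

lemma Ev_eq_esymmMean (n k : ℕ) (κ : Fin n → ℝ) :
    Ev n k κ = (Finset.univ.val.map κ).esymmMean k := by
  rw [Ev, Multiset.esymmMean, Finset.esymm_map_val, Multiset.card_map, Finset.card_val,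
    Finset.card_univ, Fintype.card_fin]

theorem newton_maclaurin_general (n k : ℕ) (hkn : k + 1 ≤ n)
    (κ : Fin n → ℝ) (hκ : ∀ i, 1 ≤ i → i ≤ k → 0 < Ev n i κ)
    (l : ℕ) (hl : 1 ≤ l) (hlk : l ≤ k) :
    Ev n (k + 1) κ * Ev n (l - 1) κ ≤ Ev n l κ * Ev n k κ ∧
      (Ev n (k + 1) κ * Ev n (l - 1) κ = Ev n l κ * Ev n k κ ↔
        ∀ i j : Fin n, κ i = κ j) := by
  have hpos : ∀ j ≤ k, 0 < (Finset.univ.val.map κ).esymmMean j := fun j hj => by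
    rcases Nat.eq_zero_or_pos j with rfl | hj0
    · simp
    · exact Ev_eq_esymmMean n j κ ▸ hκ j hj0 hj
  obtain ⟨l, rfl⟩ : ∃ l', l = l' + 1 := ⟨l - 1, by omega⟩
  obtain ⟨k, rfl⟩ : ∃ k', k = k' + 1 := ⟨k - 1, by omega⟩
  simp only [Ev_eq_esymmMean, Nat.add_sub_cancel]
  set s := Finset.univ.val.map κ
  have hcard : Multiset.card s = n := by simp [s]
  have hconc : ∀ j, j + 1 ≤ k + 1 →
      s.esymmMean j * s.esymmMean (j + 2) ≤ s.esymmMean (j + 1) ^ 2 :=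
    fun j _ => s.esymmMean_mul_le_sq (by omega)
  refine ⟨mul_le_mul_of_mul_le_sq hpos hconc (by omega), fun h i j => ?_, fun hall => ?_⟩
  · have hk := mul_eq_sq_of_mul_eq_mul hpos hconc (by omega) h
    have hne : s.esymmMean (k + 2) ≠ 0 := fun h0 =>
      (pow_pos (hpos (k + 1) le_rfl) 2).ne' (by rw [← hk, h0, mul_zero])
    obtain ⟨c, hc⟩ := s.exists_forall_eq_of_esymmMean_mul_eq_sq (by omega) hne hk
    rw [hc _ (Multiset.mem_map_of_mem κ (Finset.mem_univ i)),
      hc _ (Multiset.mem_map_of_mem κ (Finset.mem_univ j))]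
  · have hc : ∀ a ∈ s, a = κ ⟨0, by omega⟩ := fun a ha => by
      obtain ⟨i, -, rfl⟩ := Multiset.mem_map.mp ha
      exact hall i _
    have hpow : ∀ j ≤ n, s.esymmMean j = κ ⟨0, by omega⟩ ^ j := fun j hj =>
      Multiset.esymmMean_eq_pow_of_forall_eq hc (by omega)
    rw [hpow _ (by omega), hpow _ (by omega), hpow _ (by omega), hpow _ (by omega)]
    ring

/-- Newton–MacLaurin inequality: if `κ` lies in the Garding cone
`Γ_k⁺ = {x : E_i(x) > 0, i = 1,…,k}`, then for all `1 ≤ l ≤ k` one has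
`E_{k+1}(κ) E_{l-1}(κ) ≤ E_l(κ) E_k(κ)`, with equality iff all `κ_i` coincide. -/
theorem newton_maclaurin (n k : ℕ) (hk : 1 ≤ k) (hkn : k + 1 ≤ n)
    (κ : Fin n → ℝ) (hκ : ∀ i, 1 ≤ i → i ≤ k → 0 < Ev n i κ)
    (l : ℕ) (hl : 1 ≤ l) (hlk : l ≤ k) :
    Ev n (k + 1) κ * Ev n (l - 1) κ ≤ Ev n l κ * Ev n k κ ∧
      (Ev n (k + 1) κ * Ev n (l - 1) κ = Ev n l κ * Ev n k κ ↔
        ∀ i j : Fin n, κ i = κ j) :=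
  newton_maclaurin_general n k hkn κ hκ l hl hlk
end

section
/- Minkowski formula for curves: for a smooth closed curve γ in ℍ², ∫_γ (φ'(r) − κ u) ds = 0, where κ is the geodesic curvature and u the support function. -/
open Real in
/-- Minkowski formula for curves: for a smooth closed curve
`s ↦ (r(s), θ(s))` in `ℍ²` (metric `dr² + sinh²r dθ²`), parametrized by arc length with
period `L` and winding once around the origin, with geodesic curvature `κ` (defined via
the Frenet equation `∇̄_T T = -κν`) and support function `u = ⟨sinh r ∂_r, ν⟩ = sinh²r θ'`,
one has `∫_γ (φ'(r) - κ u) ds = 0` where `φ'(r) = cosh r`. -/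
theorem minkowski_formula_curve
    (r θ κ : ℝ → ℝ) (L : ℝ) (hL : 0 < L)
    (hr : ContDiff ℝ (⊤ : ℕ∞) r) (hθ : ContDiff ℝ (⊤ : ℕ∞) θ) (hκ : Continuous κ)
    (hrpos : ∀ s, 0 < r s)
    (hper_r : ∀ s, r (s + L) = r s)
    (hper_θ : ∀ s, θ (s + L) = θ s + 2 * Real.pi)
    (hper_κ : ∀ s, κ (s + L) = κ s)
    (harc : ∀ s, (deriv r s) ^ 2 + Real.sinh (r s) ^ 2 * (deriv θ s) ^ 2 = 1)
    (hFrenet₁ : ∀ s, deriv (deriv r) s - Real.sinh (r s) * Real.cosh (r s) * (deriv θ s) ^ 2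
        = -(κ s) * Real.sinh (r s) * deriv θ s)
    (hFrenet₂ : ∀ s, deriv (deriv θ) s
        + 2 * (Real.cosh (r s) / Real.sinh (r s)) * deriv r s * deriv θ s
        = κ s * deriv r s / Real.sinh (r s)) :
    ∫ s in (0 : ℝ)..L,
        (Real.cosh (r s) - κ s * (Real.sinh (r s) ^ 2 * deriv θ s)) = 0 := by
  set F : ℝ → ℝ := fun s => Real.sinh (r s) * deriv r s with hF
  have hdr : Differentiable ℝ r := hr.differentiable (by simp)
  have hrT : ContDiff ℝ (⊤ : ℕ∞) r := hr.of_le (by simp)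
  have hdr' : Differentiable ℝ (deriv r) :=
    (contDiff_infty_iff_deriv.mp hrT).2.differentiable (by simp)
  have hcθ' : Continuous (deriv θ) := hθ.continuous_deriv (by simp)
  have hcr' : Continuous (deriv r) := hr.continuous_deriv (by simp)
  have hder : ∀ s, HasDerivAt F
      (Real.cosh (r s) - κ s * (Real.sinh (r s) ^ 2 * deriv θ s)) s := by
    intro s
    have h1 : HasDerivAt (fun t => Real.sinh (r t)) (Real.cosh (r s) * deriv r s) s :=
      (Real.hasDerivAt_sinh (r s)).comp s (hdr s).hasDerivAt
    have h2 : HasDerivAt (deriv r) (deriv (deriv r) s) s := (hdr' s).hasDerivAt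
    have : HasDerivAt (fun t => Real.sinh (r t) * deriv r t) _ s := h1.mul h2
    convert this using 1
    have e1 := harc s
    have e2 := hFrenet₁ s
    linear_combination (-Real.cosh (r s)) * e1 - Real.sinh (r s) * e2
  have hcr : Continuous r := hr.continuous
  have hcont : Continuous (fun s => Real.cosh (r s) - κ s * (Real.sinh (r s) ^ 2 * deriv θ s)) :=
    (Real.continuous_cosh.comp hcr).sub
      (hκ.mul (((Real.continuous_sinh.comp hcr).pow 2).mul hcθ'))
  have hint := intervalIntegral.integral_eq_sub_of_hasDerivAt
    (f := F) (a := (0:ℝ)) (b := L)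
    (fun s _ => hder s) (hcont.intervalIntegrable 0 L)
  rw [hint]
  have h1 : r L = r 0 := by simpa using hper_r 0
  have h2 : deriv r L = deriv r 0 := by
    have e : (fun s => r (s + L)) = r := funext hper_r
    have := deriv_comp_add_const (f := r) (a := L) (x := (0:ℝ))
    rw [e] at this
    simpa using this.symm
  simp [hF, h1, h2]
end

section
/- For a smooth bounded domain Ω in ℍ^{n+1} with shifted principal curvatures κ̃ of ∂Ω, the modified quermassintegrals W̃_k(Ω) = ∑_{i=0}^k (−1)^{k−i} (k choose i) W_i(Ω) satisfy ∫_{∂Ω} E_k(κ̃) dμ = (n−k) W̃_{k+1}(Ω) + (n−2k) W̃_k(Ω) for k = 1,...,n−1. -/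
/-!
With the forward difference `Δ` of step one on `ℕ`, the modified quermassintegral is
`W̃_k = (Δ^k W) 0` and the left-hand side is `(Δ^k J) 0` for
`J i = (n - i) W (i + 1) + i W (i - 1)`, which agrees with `I` on `0, …, k`
(at `i = 0` the factor `i` kills the truncated index `i - 1`).
A Leibniz rule for the linear weight `i` gives
`(Δ^k J) 0 = n (Δ^k W) 1 - k (Δ^(k-1) W) 2 + k (Δ^(k-1) W) 0`,
and expanding the shifted differences through `(Δ^j W) (y + 1) = (Δ^j W) y + (Δ^(j+1) W) y`
leaves `(n - k) W̃_{k+1} + (n - 2k) W̃_k`.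
-/

open Finset fwdDiff

section

variable {M G : Type*} [AddCommMonoid M] [AddCommGroup G]

theorem fwdDiff_iter_sub (h : M) (f g : M → G) (n : ℕ) :
    Δ_[h] ^[n] (f - g) = Δ_[h] ^[n] f - Δ_[h] ^[n] g := by
  simpa only [fwdDiff_aux.coe_fwdDiffₗ_pow] using map_sub (fwdDiff_aux.fwdDiffₗ M G h ^ n) f g

theorem fwdDiff_iter_succ_apply (h : M) (f : M → G) (n : ℕ) (y : M) :
    Δ_[h] ^[n + 1] f y = Δ_[h] ^[n] f (y + h) - Δ_[h] ^[n] f y := by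
  rw [Function.iterate_succ_apply']
  rfl

theorem fwdDiff_iter_succ_nsmul (f : ℕ → G) (k y : ℕ) :
    Δ_[1] ^[k + 1] (fun i ↦ i • f i) y
      = y • Δ_[1] ^[k + 1] f y + (k + 1) • Δ_[1] ^[k] f (y + 1) := by
  induction k generalizing y with
  | zero =>
    simp only [fwdDiff, Function.iterate_one, Function.iterate_zero, id_eq, zero_add, one_smul,
      smul_sub, add_smul]
    abel
  | succ k ih =>
    rw [fwdDiff_iter_succ_apply, ih, ih, fwdDiff_iter_succ_apply 1 f (k + 1) y,
      fwdDiff_iter_succ_apply 1 f k (y + 1)]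
    simp only [add_smul, smul_sub, one_smul]
    abel

end

theorem fwdDiff_iter_apply_zero_eq_sum {R : Type*} [Ring R] (f : ℕ → R) (k : ℕ) :
    Δ_[1] ^[k] f 0 = ∑ i ∈ range (k + 1), (-1 : R) ^ (k - i) * (k.choose i : R) * f i := by
  simp [fwdDiff_iter_eq_sum_shift, zsmul_eq_mul]

theorem fwdDiff_iter_succ_linear_mul_shift {R : Type*} [Ring R] (c : R) (W : ℕ → R) (m : ℕ) :
    Δ_[1] ^[m + 1] (fun i ↦ (c - i) * W (i + 1) + i * W (i - 1)) 0
      = c * Δ_[1] ^[m + 1] W 1 - (m + 1) * Δ_[1] ^[m] W 2 + (m + 1) * Δ_[1] ^[m] W 0 := by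
  have hsplit : (fun i : ℕ ↦ (c - i) * W (i + 1) + i * W (i - 1))
      = c • (fun i ↦ W (i + 1)) - (fun i ↦ i • W (i + 1)) + fun i ↦ i • W (i - 1) := by
    funext i
    simp only [Pi.add_apply, Pi.sub_apply, Pi.smul_apply, smul_eq_mul, nsmul_eq_mul, sub_mul]
  have h1 : Δ_[1] ^[m + 1] (fun i ↦ W (i + 1)) 0 = Δ_[1] ^[m + 1] W 1 := by
    simpa using fwdDiff_iter_comp_add 1 W 1 (m + 1) 0
  have h2 : Δ_[1] ^[m] (fun i ↦ W (i + 1)) 1 = Δ_[1] ^[m] W 2 :=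
    fwdDiff_iter_comp_add 1 W 1 m 1
  have h3 : Δ_[1] ^[m] (fun i ↦ W (i - 1)) 1 = Δ_[1] ^[m] W 0 := by
    simpa using (fwdDiff_iter_comp_add 1 (fun i ↦ W (i - 1)) 1 m 0).symm
  rw [hsplit, fwdDiff_iter_add, fwdDiff_iter_sub, fwdDiff_iter_const_smul, Pi.add_apply,
    Pi.sub_apply, Pi.smul_apply, fwdDiff_iter_succ_nsmul, fwdDiff_iter_succ_nsmul, h1, h2, h3]
  simp only [zero_smul, zero_add, smul_eq_mul, nsmul_eq_mul]
  push_cast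
  abel

theorem modified_quermassintegral_relation_general (n : ℕ)
    (W I : ℕ → ℝ)
    (hI0 : I 0 = (n : ℝ) * W 1)
    (hI : ∀ k, 1 ≤ k → k ≤ n - 1 →
      I k = ((n : ℝ) - (k : ℝ)) * W (k + 1) + (k : ℝ) * W (k - 1))
    (k : ℕ) (hk1 : 1 ≤ k) (hkn : k ≤ n - 1) :
    (∑ i ∈ Finset.range (k + 1), (-1 : ℝ) ^ (k - i) * (k.choose i : ℝ) * I i)
      = ((n : ℝ) - (k : ℝ)) *
          (∑ i ∈ Finset.range (k + 2), (-1 : ℝ) ^ (k + 1 - i) * ((k + 1).choose i : ℝ) * W i)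
        + ((n : ℝ) - 2 * (k : ℝ)) *
          (∑ i ∈ Finset.range (k + 1), (-1 : ℝ) ^ (k - i) * (k.choose i : ℝ) * W i) := by
  obtain ⟨m, rfl⟩ : ∃ m, k = m + 1 := ⟨k - 1, by omega⟩
  have hI_range : ∀ i ∈ range (m + 1 + 1), I i = (n - i) * W (i + 1) + i * W (i - 1) := by
    intro i hi
    rcases Nat.eq_zero_or_pos i with rfl | hi0
    · simp [hI0]
    · exact hI i hi0 (by simp at hi; omega)
  rw [sum_congr rfl fun i hi ↦ by rw [hI_range i hi], ← fwdDiff_iter_apply_zero_eq_sum,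
    ← fwdDiff_iter_apply_zero_eq_sum, ← fwdDiff_iter_apply_zero_eq_sum,
    fwdDiff_iter_succ_linear_mul_shift]
  have e1 : Δ_[1] ^[m + 2] W 0 = Δ_[1] ^[m + 1] W 1 - Δ_[1] ^[m + 1] W 0 :=
    fwdDiff_iter_succ_apply 1 W (m + 1) 0
  have e2 : Δ_[1] ^[m + 1] W 0 = Δ_[1] ^[m] W 1 - Δ_[1] ^[m] W 0 :=
    fwdDiff_iter_succ_apply 1 W m 0
  have e3 : Δ_[1] ^[m + 1] W 1 = Δ_[1] ^[m] W 2 - Δ_[1] ^[m] W 1 :=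
    fwdDiff_iter_succ_apply 1 W m 1
  push_cast
  linear_combination (m + 1 - n : ℝ) * e1 + (m + 1 : ℝ) * e2 + (m + 1 : ℝ) * e3

/-- let `W k = W_k(Ω)` be the quermassintegrals of a smooth bounded
(convex) domain `Ω ⊂ ℍ^{n+1}` and `I k = ∫_{∂Ω} E_k(κ) dμ` the curvature integrals, so
that `I 0 = |∂Ω| = n W 1` and `I k = (n-k) W_{k+1} + k W_{k-1}` for `1 ≤ k ≤ n-1`.
Since `E_k(κ̃) = ∑_{i≤k} (-1)^{k-i} (k choose i) E_i(κ)` for the shifted principal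
curvatures `κ̃ᵢ = κᵢ - 1`, the shifted curvature integral
`∫_{∂Ω} E_k(κ̃) dμ = ∑_{i≤k} (-1)^{k-i} (k choose i) I i` satisfies
`∫_{∂Ω} E_k(κ̃) dμ = (n-k) W̃_{k+1}(Ω) + (n-2k) W̃_k(Ω)` for `1 ≤ k ≤ n-1`, where
`W̃_k(Ω) = ∑_{i≤k} (-1)^{k-i} (k choose i) W_i(Ω)` are the modified quermassintegrals. -/
theorem modified_quermassintegral_relation (n : ℕ) (hn : 2 ≤ n)
    (W I : ℕ → ℝ)
    (hI0 : I 0 = (n : ℝ) * W 1)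
    (hI : ∀ k, 1 ≤ k → k ≤ n - 1 →
      I k = ((n : ℝ) - (k : ℝ)) * W (k + 1) + (k : ℝ) * W (k - 1))
    (k : ℕ) (hk1 : 1 ≤ k) (hkn : k ≤ n - 1) :
    (∑ i ∈ Finset.range (k + 1), (-1 : ℝ) ^ (k - i) * (k.choose i : ℝ) * I i)
      = ((n : ℝ) - (k : ℝ)) *
          (∑ i ∈ Finset.range (k + 2), (-1 : ℝ) ^ (k + 1 - i) * ((k + 1).choose i : ℝ) * W i)
        + ((n : ℝ) - 2 * (k : ℝ)) *
          (∑ i ∈ Finset.range (k + 1), (-1 : ℝ) ^ (k - i) * (k.choose i : ℝ) * W i) :=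
  modified_quermassintegral_relation_general n W I hI0 hI k hk1 hkn
end

section
/- Along the flow ∂_t X = ((φ'(r) − u)/(κ − 1) − u) ν for strictly h-convex closed curves in ℍ², the quantity L[γ_t] − A[γ_t] (length minus enclosed area) is constant in time. -/
open Real

/-- Spatial derivative `ρ_θ` of a time-dependent graph function. -/
noncomputable def pTh (ρ : ℝ → ℝ → ℝ) (θ t : ℝ) : ℝ := deriv (fun θ' => ρ θ' t) θ

/-- Second spatial derivative `ρ_θθ`. -/
noncomputable def pThTh (ρ : ℝ → ℝ → ℝ) (θ t : ℝ) : ℝ := deriv (fun θ' => pTh ρ θ' t) θ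

/-- The geodesic curvature of the graph curve `{(ρ(θ,t), θ)}` in `ℍ²`
(metric `dr² + sinh²r dθ²`):
`κ = (φ²φ' + 2ρ_θ²φ' - ρ_θθ φ)/(φ² + ρ_θ²)^{3/2}` with `φ = sinh`, `φ' = cosh`. -/
noncomputable def curvκ (ρ : ℝ → ℝ → ℝ) (θ t : ℝ) : ℝ :=
  (Real.sinh (ρ θ t) ^ 2 * Real.cosh (ρ θ t)
      + 2 * (pTh ρ θ t) ^ 2 * Real.cosh (ρ θ t) - pThTh ρ θ t * Real.sinh (ρ θ t))
    / (Real.sinh (ρ θ t) ^ 2 + (pTh ρ θ t) ^ 2) ^ ((3 : ℝ) / 2)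

open MeasureTheory Set




noncomputable def Pfun (ρ : ℝ → ℝ → ℝ) (x : ℝ × ℝ) : ℝ :=
  fderiv ℝ (Function.uncurry ρ) x (1, 0)

noncomputable def Wfun (ρ : ℝ → ℝ → ℝ) (x : ℝ × ℝ) : ℝ :=
  fderiv ℝ (Function.uncurry ρ) x (0, 1)

noncomputable def Mfun (ρ : ℝ → ℝ → ℝ) (x : ℝ × ℝ) : ℝ :=
  fderiv ℝ (Wfun ρ) x (1, 0)

lemma hasDerivAt_slice_fst {f : ℝ × ℝ → ℝ} (hf : Differentiable ℝ f) (θ t : ℝ) :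
    HasDerivAt (fun θ' => f (θ', t)) (fderiv ℝ f (θ, t) (1, 0)) θ := by
  have h1 : HasDerivAt (fun θ' : ℝ => (θ', t)) ((1 : ℝ), (0 : ℝ)) θ :=
    (hasDerivAt_id θ).prodMk (hasDerivAt_const θ t)
  exact (hf (θ, t)).hasFDerivAt.comp_hasDerivAt θ h1

lemma hasDerivAt_slice_snd {f : ℝ × ℝ → ℝ} (hf : Differentiable ℝ f) (θ t : ℝ) :
    HasDerivAt (fun t' => f (θ, t')) (fderiv ℝ f (θ, t) (0, 1)) t := by
  have h1 : HasDerivAt (fun t' : ℝ => (θ, t')) ((0 : ℝ), (1 : ℝ)) t :=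
    (hasDerivAt_const t θ).prodMk (hasDerivAt_id t)
  exact (hf (θ, t)).hasFDerivAt.comp_hasDerivAt t h1

lemma contDiff_fderiv_apply {f : ℝ × ℝ → ℝ} (hf : ContDiff ℝ (⊤ : ℕ∞) f) (v : ℝ × ℝ) :
    ContDiff ℝ (⊤ : ℕ∞) (fun x => fderiv ℝ f x v) :=
  (hf.fderiv_right (by simp)).clm_apply contDiff_const

lemma mixed_partials_symm {f : ℝ × ℝ → ℝ} (hf : ContDiff ℝ (⊤ : ℕ∞) f) (x v w : ℝ × ℝ) :
    fderiv ℝ (fun y => fderiv ℝ f y v) x w = fderiv ℝ (fun y => fderiv ℝ f y w) x v := by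
  have hdiff : ∀ y, HasFDerivAt f (fderiv ℝ f y) y := fun y =>
    (hf.differentiable (by simp) y).hasFDerivAt
  have h2 : HasFDerivAt (fderiv ℝ f) (fderiv ℝ (fderiv ℝ f) x) x :=
    (((hf.fderiv_right (m := (⊤ : ℕ∞)) (by simp)).differentiable (by simp)) x).hasFDerivAt
  have hv : HasFDerivAt (fun y => fderiv ℝ f y v)
      ((ContinuousLinearMap.apply ℝ ℝ v).comp (fderiv ℝ (fderiv ℝ f) x)) x :=
    (ContinuousLinearMap.apply ℝ ℝ v).hasFDerivAt.comp x h2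
  have hw : HasFDerivAt (fun y => fderiv ℝ f y w)
      ((ContinuousLinearMap.apply ℝ ℝ w).comp (fderiv ℝ (fderiv ℝ f) x)) x :=
    (ContinuousLinearMap.apply ℝ ℝ w).hasFDerivAt.comp x h2
  rw [hv.fderiv, hw.fderiv]
  simpa using second_derivative_symmetric hdiff h2 w v

section Bridge

variable {ρ : ℝ → ℝ → ℝ}

lemma hasDerivAt_rho_theta (hρ : ContDiff ℝ (⊤ : ℕ∞) (Function.uncurry ρ)) (θ t : ℝ) :
    HasDerivAt (fun θ' => ρ θ' t) (Pfun ρ (θ, t)) θ :=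
  hasDerivAt_slice_fst (hρ.differentiable (by simp)) θ t

lemma hasDerivAt_rho_t (hρ : ContDiff ℝ (⊤ : ℕ∞) (Function.uncurry ρ)) (θ t : ℝ) :
    HasDerivAt (fun t' => ρ θ t') (Wfun ρ (θ, t)) t :=
  hasDerivAt_slice_snd (hρ.differentiable (by simp)) θ t

lemma pTh_eq (hρ : ContDiff ℝ (⊤ : ℕ∞) (Function.uncurry ρ)) (θ t : ℝ) : pTh ρ θ t = Pfun ρ (θ, t) :=
  (hasDerivAt_rho_theta hρ θ t).deriv

lemma derivT_eq (hρ : ContDiff ℝ (⊤ : ℕ∞) (Function.uncurry ρ)) (θ t : ℝ) : deriv (fun t' => ρ θ t') t = Wfun ρ (θ, t) :=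
  (hasDerivAt_rho_t hρ θ t).deriv

lemma contDiff_Pfun (hρ : ContDiff ℝ (⊤ : ℕ∞) (Function.uncurry ρ)) : ContDiff ℝ (⊤ : ℕ∞) (Pfun ρ) := contDiff_fderiv_apply hρ (1, 0)

lemma contDiff_Wfun (hρ : ContDiff ℝ (⊤ : ℕ∞) (Function.uncurry ρ)) : ContDiff ℝ (⊤ : ℕ∞) (Wfun ρ) := contDiff_fderiv_apply hρ (0, 1)

lemma contDiff_Mfun (hρ : ContDiff ℝ (⊤ : ℕ∞) (Function.uncurry ρ)) : ContDiff ℝ (⊤ : ℕ∞) (Mfun ρ) :=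
  contDiff_fderiv_apply (contDiff_Wfun hρ) (1, 0)

lemma hasDerivAt_P_theta (hρ : ContDiff ℝ (⊤ : ℕ∞) (Function.uncurry ρ)) (θ t : ℝ) :
    HasDerivAt (fun θ' => Pfun ρ (θ', t)) (pThTh ρ θ t) θ := by
  have h := hasDerivAt_slice_fst ((contDiff_Pfun hρ).differentiable (by simp)) θ t
  have : pThTh ρ θ t = fderiv ℝ (Pfun ρ) (θ, t) (1, 0) := by
    have h2 : (fun θ' => pTh ρ θ' t) = fun θ' => Pfun ρ (θ', t) :=
      funext fun θ' => pTh_eq hρ θ' t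
    rw [pThTh, h2, h.deriv]
  rw [this]; exact h

lemma hasDerivAt_W_theta (hρ : ContDiff ℝ (⊤ : ℕ∞) (Function.uncurry ρ)) (θ t : ℝ) :
    HasDerivAt (fun θ' => Wfun ρ (θ', t)) (Mfun ρ (θ, t)) θ :=
  hasDerivAt_slice_fst ((contDiff_Wfun hρ).differentiable (by simp)) θ t

lemma hasDerivAt_P_t (hρ : ContDiff ℝ (⊤ : ℕ∞) (Function.uncurry ρ)) (θ t : ℝ) :
    HasDerivAt (fun t' => Pfun ρ (θ, t')) (Mfun ρ (θ, t)) t := by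
  have h := hasDerivAt_slice_snd ((contDiff_Pfun hρ).differentiable (by simp)) θ t
  have : fderiv ℝ (Pfun ρ) (θ, t) (0, 1) = Mfun ρ (θ, t) :=
    mixed_partials_symm hρ (θ, t) (1, 0) (0, 1)
  rwa [this] at h

end Bridge

lemma key_algebra (a b p q w m s k : ℝ) (ha : 0 < a) (hs : 0 < s)
    (hs2 : s ^ 2 = a ^ 2 + p ^ 2)
    (hk : k * s ^ 3 = a ^ 2 * b + 2 * p ^ 2 * b - q * a)
    (hk1 : 1 < k)
    (hw : w = (b * (s / a) - a) / (k - 1) - a) :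
    ((q * (w + a) + p * (m + b * p)) * s
        - p * (w + a) * ((2 * a * (b * p) + 2 * p * q) / (2 * s))) / s ^ 2
      = (a * b * w + p * m) / s - a * w := by
  have hk1' : k - 1 ≠ 0 := by linarith
  have hw1 : w + a = (b * (s / a) - a) / (k - 1) := by rw [hw]; ring
  have hw2 : (w + a) * (k - 1) * a = b * s - a ^ 2 := by
    rw [hw1, div_mul_cancel₀ _ hk1', sub_mul, mul_assoc, div_mul_cancel₀ s ha.ne']; ring
  have hE : (q * (w + a) * s ^ 2 + b * p ^ 2 * s ^ 2 - p ^ 2 * (w + a) * (a * b + q)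
      - a * b * w * s ^ 2 + a * w * s ^ 3) = 0 := by
    linear_combination (q * (w + a) - b * s ^ 2 - a * (w + a) * b) * hs2 + a * (w + a) * hk - s ^ 3 * hw2
  rw [← sub_eq_zero]
  have hkey : ((q * (w + a) + p * (m + b * p)) * s
        - p * (w + a) * ((2 * a * (b * p) + 2 * p * q) / (2 * s))) / s ^ 2
      - ((a * b * w + p * m) / s - a * w) = (q * (w + a) * s ^ 2 + b * p ^ 2 * s ^ 2 - p ^ 2 * (w + a) * (a * b + q)
      - a * b * w * s ^ 2 + a * w * s ^ 3) / s ^ 3 := by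
    field_simp
    ring
  rw [hkey, hE, zero_div]


lemma key_deriv {ρ : ℝ → ℝ → ℝ} (hρ : ContDiff ℝ (⊤ : ℕ∞) (Function.uncurry ρ)) (θ t : ℝ)
    (hr : 0 < ρ θ t) (hconv : 1 < curvκ ρ θ t)
    (hflow : deriv (fun t' => ρ θ t') t
      = (Real.cosh (ρ θ t) * Real.sqrt (1 + (pTh ρ θ t) ^ 2 / Real.sinh (ρ θ t) ^ 2)
          - Real.sinh (ρ θ t)) / (curvκ ρ θ t - 1) - Real.sinh (ρ θ t)) :
    HasDerivAt (fun θ' => Pfun ρ (θ', t) * (Wfun ρ (θ', t) + Real.sinh (ρ θ' t)) /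
        Real.sqrt (Real.sinh (ρ θ' t) ^ 2 + Pfun ρ (θ', t) ^ 2))
      ((Real.sinh (ρ θ t) * Real.cosh (ρ θ t) * Wfun ρ (θ, t)
            + Pfun ρ (θ, t) * Mfun ρ (θ, t)) /
          Real.sqrt (Real.sinh (ρ θ t) ^ 2 + Pfun ρ (θ, t) ^ 2)
        - Real.sinh (ρ θ t) * Wfun ρ (θ, t)) θ := by
  set a := Real.sinh (ρ θ t) with ha_def
  set b := Real.cosh (ρ θ t) with hb_def
  set p := Pfun ρ (θ, t) with hp_def
  set q := pThTh ρ θ t with hq_def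
  set w := Wfun ρ (θ, t) with hw_def
  set m := Mfun ρ (θ, t) with hm_def
  have ha : 0 < a := Real.sinh_pos_iff.mpr hr
  have hX : (0 : ℝ) < a ^ 2 + p ^ 2 := by positivity
  set s := Real.sqrt (a ^ 2 + p ^ 2) with hs_def
  have hs : 0 < s := Real.sqrt_pos.mpr hX
  have hs2 : s ^ 2 = a ^ 2 + p ^ 2 := Real.sq_sqrt hX.le
  -- identify curvκ
  have h32 : (a ^ 2 + p ^ 2) ^ ((3 : ℝ) / 2) = s ^ 3 := by
    rw [show ((3 : ℝ) / 2) = (1 / 2 : ℝ) * ((3 : ℕ) : ℝ) by norm_num,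
      Real.rpow_mul hX.le, Real.rpow_natCast, ← Real.sqrt_eq_rpow]
  have hkappa : curvκ ρ θ t = (a ^ 2 * b + 2 * p ^ 2 * b - q * a) / s ^ 3 := by
    rw [curvκ, pTh_eq hρ, h32, ← hp_def, ← hq_def, ← ha_def, ← hb_def]
  set k := curvκ ρ θ t with hk_def
  have hk : k * s ^ 3 = a ^ 2 * b + 2 * p ^ 2 * b - q * a := by
    rw [hkappa]; field_simp
  -- rewrite the flow hypothesis
  have hsq1 : Real.sqrt (1 + p ^ 2 / a ^ 2) = s / a := by
    have h1 : 1 + p ^ 2 / a ^ 2 = (s / a) ^ 2 := by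
      rw [div_pow, hs2]; field_simp
    rw [h1, Real.sqrt_sq (by positivity)]
  have hw : w = (b * (s / a) - a) / (k - 1) - a := by
    rw [hw_def, ← derivT_eq hρ, hflow, pTh_eq hρ, hsq1]
  -- build the derivative
  have hrθ := hasDerivAt_rho_theta hρ θ t
  have hsinh : HasDerivAt (fun θ' => Real.sinh (ρ θ' t)) (b * p) θ := by
    simpa using hrθ.sinh
  have hP := hasDerivAt_P_theta hρ θ t
  have hW := hasDerivAt_W_theta hρ θ t
  have hnum := hP.fun_mul (hW.fun_add hsinh)
  have hin := (hsinh.fun_pow 2).fun_add (hP.fun_pow 2)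
  have hsqrt := hin.sqrt (by rw [← ha_def]; exact hX.ne')
  have hQ := hnum.fun_div hsqrt (by rw [← ha_def, ← hs_def]; exact hs.ne')
  rw [← ha_def, ← hs_def] at hQ
  refine hQ.congr_deriv ?_
  rw [← hp_def, ← hq_def, ← hw_def, ← hm_def]
  have halg := key_algebra a b p q w m s k ha hs hs2 hk hconv hw
  linear_combination halg

lemma Pfun_periodic {ρ : ℝ → ℝ → ℝ} (hρ : ContDiff ℝ (⊤ : ℕ∞) (Function.uncurry ρ))
    (hper : ∀ θ t, ρ (θ + 2 * π) t = ρ θ t) (θ t : ℝ) :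
    Pfun ρ (θ + 2 * π, t) = Pfun ρ (θ, t) := by
  have h1 := hasDerivAt_rho_theta hρ (θ + 2 * π) t
  have hshift : HasDerivAt (fun θ' : ℝ => θ' + 2 * π) 1 θ := (hasDerivAt_id θ).add_const _
  have h2 := h1.comp θ hshift
  have h3 : (fun θ' => ρ θ' t) ∘ (fun θ' : ℝ => θ' + 2 * π) = fun θ' => ρ θ' t :=
    funext fun x => hper x t
  rw [h3] at h2
  have h4 := h2.unique (hasDerivAt_rho_theta hρ θ t)
  simpa using h4

lemma Wfun_periodic {ρ : ℝ → ℝ → ℝ} (hρ : ContDiff ℝ (⊤ : ℕ∞) (Function.uncurry ρ))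
    (hper : ∀ θ t, ρ (θ + 2 * π) t = ρ θ t) (θ t : ℝ) :
    Wfun ρ (θ + 2 * π, t) = Wfun ρ (θ, t) := by
  rw [← derivT_eq hρ, ← derivT_eq hρ]
  congr 1
  exact funext fun t' => hper θ t'

/-- along the locally constrained flow
`∂_t X = ((φ'(r) - u)/(κ - 1) - u) ν` for strictly h-convex closed curves in `ℍ²`
(written as graphs `{(ρ(θ,t),θ)}`, where the flow is equivalent to the scalar equation
`∂_t ρ = (cosh ρ √(1 + ρ_θ²/sinh²ρ) - sinh ρ)/(κ-1) - sinh ρ`), the quantity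
`L[γ_t] - A[γ_t]` (length minus enclosed area) is constant in time. -/
theorem length_minus_area_constant
    (ρ : ℝ → ℝ → ℝ)
    (hρ : ContDiff ℝ (⊤ : ℕ∞) (Function.uncurry ρ))
    (hρpos : ∀ θ t, 0 ≤ t → 0 < ρ θ t)
    (hper : ∀ θ t, ρ (θ + 2 * π) t = ρ θ t)
    (hconv : ∀ θ t, 0 ≤ t → 1 < curvκ ρ θ t)
    (hflow : ∀ θ t, 0 ≤ t →
      deriv (fun t' => ρ θ t') t
        = (Real.cosh (ρ θ t) * Real.sqrt (1 + (pTh ρ θ t) ^ 2 / Real.sinh (ρ θ t) ^ 2)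
            - Real.sinh (ρ θ t)) / (curvκ ρ θ t - 1) - Real.sinh (ρ θ t)) :
    ∀ t, 0 ≤ t →
      (∫ θ in (0 : ℝ)..(2 * π), Real.sqrt (Real.sinh (ρ θ t) ^ 2 + (pTh ρ θ t) ^ 2))
        - (∫ θ in (0 : ℝ)..(2 * π), (Real.cosh (ρ θ t) - 1))
      = (∫ θ in (0 : ℝ)..(2 * π), Real.sqrt (Real.sinh (ρ θ 0) ^ 2 + (pTh ρ θ 0) ^ 2))
        - (∫ θ in (0 : ℝ)..(2 * π), (Real.cosh (ρ θ 0) - 1)) := by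
  -- notation and basic continuity facts
  have hc_rho : Continuous (Function.uncurry ρ) := hρ.continuous
  have hcP : Continuous (Pfun ρ) := (contDiff_Pfun hρ).continuous
  have hcW : Continuous (Wfun ρ) := (contDiff_Wfun hρ).continuous
  have hcM : Continuous (Mfun ρ) := (contDiff_Mfun hρ).continuous
  have hslice : ∀ τ : ℝ, Continuous (fun θ : ℝ => (θ, τ)) :=
    fun τ => continuous_id.prodMk continuous_const
  have hcρ : ∀ τ : ℝ, Continuous (fun θ => ρ θ τ) :=
    fun τ => hc_rho.comp (hslice τ)
  set g : ℝ → ℝ → ℝ := fun τ θ =>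
    Real.sqrt (Real.sinh (ρ θ τ) ^ 2 + Pfun ρ (θ, τ) ^ 2) - (Real.cosh (ρ θ τ) - 1) with hg_def
  set g' : ℝ → ℝ → ℝ := fun τ θ =>
    (Real.sinh (ρ θ τ) * Real.cosh (ρ θ τ) * Wfun ρ (θ, τ)
        + Pfun ρ (θ, τ) * Mfun ρ (θ, τ)) /
      Real.sqrt (Real.sinh (ρ θ τ) ^ 2 + Pfun ρ (θ, τ) ^ 2)
      - Real.sinh (ρ θ τ) * Wfun ρ (θ, τ) with hg'_def
  have hgcont : ∀ τ, Continuous (g τ) := by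
    intro τ
    apply Continuous.sub
    · exact (Real.continuous_sqrt.comp
        (((Real.continuous_sinh.comp (hcρ τ)).pow 2).add ((hcP.comp (hslice τ)).pow 2)))
    · exact (Real.continuous_cosh.comp (hcρ τ)).sub continuous_const
  have hg'cont : ∀ τ, 0 ≤ τ → Continuous (g' τ) := by
    intro τ hτ
    have hden : ∀ θ : ℝ, Real.sqrt (Real.sinh (ρ θ τ) ^ 2 + Pfun ρ (θ, τ) ^ 2) ≠ 0 := by
      intro θ
      have : (0:ℝ) < Real.sinh (ρ θ τ) ^ 2 + Pfun ρ (θ, τ) ^ 2 := by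
        have := Real.sinh_pos_iff.mpr (hρpos θ τ hτ)
        positivity
      positivity
    apply Continuous.sub
    · exact Continuous.div
        ((((Real.continuous_sinh.comp (hcρ τ)).mul (Real.continuous_cosh.comp (hcρ τ))).mul (hcW.comp (hslice τ))).add
          ((hcP.comp (hslice τ)).mul (hcM.comp (hslice τ))))
        (Real.continuous_sqrt.comp
          (((Real.continuous_sinh.comp (hcρ τ)).pow 2).add ((hcP.comp (hslice τ)).pow 2))) hden
    · exact (Real.continuous_sinh.comp (hcρ τ)).mul (hcW.comp (hslice τ))
  -- Step A : the integral of g' vanishes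
  have hA : ∀ τ, 0 ≤ τ → (∫ θ in (0:ℝ)..(2 * π), g' τ θ) = 0 := by
    intro τ hτ
    have hQder : ∀ θ : ℝ, HasDerivAt (fun θ' =>
        Pfun ρ (θ', τ) * (Wfun ρ (θ', τ) + Real.sinh (ρ θ' τ)) /
          Real.sqrt (Real.sinh (ρ θ' τ) ^ 2 + Pfun ρ (θ', τ) ^ 2)) (g' τ θ) θ :=
      fun θ => key_deriv hρ θ τ (hρpos θ τ hτ) (hconv θ τ hτ) (hflow θ τ hτ)
    rw [intervalIntegral.integral_eq_sub_of_hasDerivAt (fun θ _ => hQder θ)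
      ((hg'cont τ hτ).intervalIntegrable 0 (2 * π))]
    have e1 : ρ (2 * π) τ = ρ 0 τ := by simpa using hper 0 τ
    have e2 : Pfun ρ (2 * π, τ) = Pfun ρ (0, τ) := by
      simpa using Pfun_periodic hρ hper 0 τ
    have e3 : Wfun ρ (2 * π, τ) = Wfun ρ (0, τ) := by
      simpa using Wfun_periodic hρ hper 0 τ
    rw [e1, e2, e3, sub_self]
  -- Step B : differentiation under the integral sign
  have hB : ∀ τ, 0 ≤ τ → HasDerivAt (fun τ' => ∫ θ in (0:ℝ)..(2 * π), g τ' θ)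
      (∫ θ in (0:ℝ)..(2 * π), g' τ θ) τ := by
    intro τ hτ
    -- positivity of ρ in a neighborhood
    have hK : IsCompact ((Set.Icc (0:ℝ) (2 * π)) ×ˢ ({τ} : Set ℝ)) :=
      isCompact_Icc.prod isCompact_singleton
    have hV : IsOpen {x : ℝ × ℝ | 0 < Function.uncurry ρ x} :=
      isOpen_lt continuous_const hc_rho
    have hKV : ((Set.Icc (0:ℝ) (2 * π)) ×ˢ ({τ} : Set ℝ)) ⊆
        {x : ℝ × ℝ | 0 < Function.uncurry ρ x} := by
      rintro ⟨θ, τ'⟩ ⟨hθ, hτ'⟩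
      simp only [Set.mem_singleton_iff] at hτ'
      rw [Set.mem_setOf_eq, hτ']
      exact hρpos θ τ hτ
    obtain ⟨δ, hδpos, hδ⟩ := hK.exists_thickening_subset_open hV hKV
    have hpos : ∀ θ ∈ Set.Icc (0:ℝ) (2 * π), ∀ τ' : ℝ, dist τ' τ < δ → 0 < ρ θ τ' := by
      intro θ hθ τ' hτ'
      have : (θ, τ') ∈ Metric.thickening δ ((Set.Icc (0:ℝ) (2 * π)) ×ˢ ({τ} : Set ℝ)) := by
        rw [Metric.mem_thickening_iff]
        refine ⟨(θ, τ), ⟨hθ, rfl⟩, ?_⟩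
        rw [Prod.dist_eq]
        simp only [dist_self]
        exact max_lt hδpos hτ'
      exact hδ this
    -- bound on the derivative on a compact slab
    have hK2 : IsCompact ((Set.Icc (0:ℝ) (2 * π)) ×ˢ (Set.Icc (τ - δ/2) (τ + δ/2))) :=
      isCompact_Icc.prod isCompact_Icc
    set G2 : ℝ × ℝ → ℝ := fun x =>
      (Real.sinh (Function.uncurry ρ x) * Real.cosh (Function.uncurry ρ x) * Wfun ρ x
          + Pfun ρ x * Mfun ρ x) /
        Real.sqrt (Real.sinh (Function.uncurry ρ x) ^ 2 + Pfun ρ x ^ 2)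
        - Real.sinh (Function.uncurry ρ x) * Wfun ρ x with hG2_def
    have hposK2 : ∀ x ∈ (Set.Icc (0:ℝ) (2 * π)) ×ˢ (Set.Icc (τ - δ/2) (τ + δ/2)),
        0 < Function.uncurry ρ x := by
      rintro ⟨θ, τ'⟩ ⟨hθ, hτ'⟩
      apply hpos θ hθ τ'
      rw [Real.dist_eq, abs_lt]
      simp only [Set.mem_Icc] at hτ'
      constructor <;> nlinarith [hδpos]
    have hG2cont : ContinuousOn G2
        ((Set.Icc (0:ℝ) (2 * π)) ×ˢ (Set.Icc (τ - δ/2) (τ + δ/2))) := by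
      apply ContinuousOn.sub
      · apply ContinuousOn.div
        · exact ((((Real.continuous_sinh.comp hc_rho).mul (Real.continuous_cosh.comp hc_rho)).mul hcW).add (hcP.mul hcM)).continuousOn
        · exact (Real.continuous_sqrt.comp (((Real.continuous_sinh.comp hc_rho).pow 2).add (hcP.pow 2))).continuousOn
        · intro x hx
          have h1 : 0 < Real.sinh (Function.uncurry ρ x) :=
            Real.sinh_pos_iff.mpr (hposK2 x hx)
          have : (0:ℝ) < Real.sinh (Function.uncurry ρ x) ^ 2 + Pfun ρ x ^ 2 := by positivity
          positivity
      · exact ((Real.continuous_sinh.comp hc_rho).mul hcW).continuousOn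
    obtain ⟨C, hC⟩ := hK2.exists_bound_of_continuousOn hG2cont
    -- apply differentiation under the integral
    have key := intervalIntegral.hasDerivAt_integral_of_dominated_loc_of_deriv_le
      (F := fun τ' θ => g τ' θ) (F' := fun τ' θ => g' τ' θ) (x₀ := τ)
      (bound := fun _ => C) (a := 0) (b := 2 * π) (s := Metric.ball τ (δ/2)) (μ := MeasureTheory.volume)
      (Metric.ball_mem_nhds τ (by positivity))
      (Filter.Eventually.of_forall fun τ' => (hgcont τ').aestronglyMeasurable)
      ((hgcont τ).intervalIntegrable 0 (2 * π))
      ((hg'cont τ hτ).aestronglyMeasurable)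
      ?_ (intervalIntegrable_const) ?_
    · exact key.2
    · -- bound
      apply Filter.Eventually.of_forall
      intro θ hθ τ' hτ'
      have hθ' : θ ∈ Set.Icc (0:ℝ) (2 * π) := by
        have h2π : (0:ℝ) ≤ 2 * π := by positivity
        rw [Set.uIoc_of_le h2π] at hθ
        exact Set.Ioc_subset_Icc_self hθ
      have hτ'2 : τ' ∈ Set.Icc (τ - δ/2) (τ + δ/2) := by
        rw [Metric.mem_ball, Real.dist_eq, abs_lt] at hτ'
        constructor <;> linarith [hτ'.1, hτ'.2]
      exact hC (θ, τ') ⟨hθ', hτ'2⟩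
    · -- differentiability in the time direction
      apply Filter.Eventually.of_forall
      intro θ hθ τ' hτ'
      have hθ' : θ ∈ Set.Icc (0:ℝ) (2 * π) := by
        have h2π : (0:ℝ) ≤ 2 * π := by positivity
        rw [Set.uIoc_of_le h2π] at hθ
        exact Set.Ioc_subset_Icc_self hθ
      have hρpos' : 0 < ρ θ τ' := by
        apply hpos θ hθ' τ'
        rw [Metric.mem_ball] at hτ'
        linarith
      have hsinh_pos : 0 < Real.sinh (ρ θ τ') := Real.sinh_pos_iff.mpr hρpos'
      have hXpos : (0:ℝ) < Real.sinh (ρ θ τ') ^ 2 + Pfun ρ (θ, τ') ^ 2 := by positivity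
      have hrt := hasDerivAt_rho_t hρ θ τ'
      have hPt := hasDerivAt_P_t hρ θ τ'
      have h1 := ((hrt.sinh.fun_pow 2).fun_add (hPt.fun_pow 2)).sqrt hXpos.ne'
      have h2 := (hrt.cosh).sub_const 1
      have h3 := h1.fun_sub h2
      have hs0 : Real.sqrt (Real.sinh (ρ θ τ') ^ 2 + Pfun ρ (θ, τ') ^ 2) ≠ 0 := by positivity
      convert h3 using 1
      rw [sub_left_inj, div_eq_div_iff hs0 (by positivity)]
      push_cast
      ring
  -- Step C : conclude constancy
  intro t ht
  have hzero : ∀ τ, 0 ≤ τ → HasDerivAt (fun τ' => ∫ θ in (0:ℝ)..(2 * π), g τ' θ) 0 τ :=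
    fun τ hτ => by have h := hB τ hτ; rwa [hA τ hτ] at h
  have hconst := constant_of_has_deriv_right_zero
    (f := fun τ' => ∫ θ in (0:ℝ)..(2 * π), g τ' θ) (a := 0) (b := t)
    (fun x hx => (hzero x hx.1).continuousAt.continuousWithinAt)
    (fun x hx => (hzero x hx.1).hasDerivWithinAt)
  have hGt : (∫ θ in (0:ℝ)..(2 * π), g t θ) = ∫ θ in (0:ℝ)..(2 * π), g 0 θ :=
    hconst t ⟨ht, le_refl t⟩
  -- rewrite the statement
  have hsplit : ∀ τ : ℝ, (∫ θ in (0:ℝ)..(2 * π), g τ θ)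
      = (∫ θ in (0:ℝ)..(2 * π), Real.sqrt (Real.sinh (ρ θ τ) ^ 2 + Pfun ρ (θ, τ) ^ 2))
        - ∫ θ in (0:ℝ)..(2 * π), (Real.cosh (ρ θ τ) - 1) := by
    intro τ
    exact intervalIntegral.integral_sub
      ((Real.continuous_sqrt.comp
        (((Real.continuous_sinh.comp (hcρ τ)).pow 2).add ((hcP.comp (hslice τ)).pow 2))).intervalIntegrable 0 (2 * π))
      (((Real.continuous_cosh.comp (hcρ τ)).sub continuous_const).intervalIntegrable 0 (2 * π))
  simp only [pTh_eq hρ]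
  rw [← hsplit t, ← hsplit 0]
  exact hGt
end

section
/- C⁰ estimate for the scalar flow: if ρ(θ,t) solves ∂_t ρ = (φ'(ρ)√(1 + ρ_θ² φ(ρ)^{-2}) − φ(ρ))/(κ − 1) − φ(ρ) on S¹×[0,T) with strictly h-convex graph curves, then min_{S¹} ρ(·,0) ≤ ρ(·,t) ≤ max_{S¹} ρ(·,0). -/
open Real

section Aux
open Set Filter Topology

lemma secondDeriv_nonpos_at_max {f : ℝ → ℝ} (hf : ContDiff ℝ (⊤ : ℕ∞) f) {a : ℝ}
    (hmax : ∀ x, f x ≤ f a) : deriv (deriv f) a ≤ 0 := by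
  by_contra hq
  push_neg at hq
  have hfi : ContDiff ℝ ((⊤:ℕ∞) : WithTop ℕ∞) f := hf.of_le (by simp)
  have hpair := contDiff_infty_iff_deriv.mp hfi
  have hf1 : Differentiable ℝ f := hpair.1
  have hf2 := hpair.2
  have hf2d : Differentiable ℝ (deriv f) := (contDiff_infty_iff_deriv.mp hf2).1
  have h0 : deriv f a = 0 :=
    IsLocalMax.deriv_eq_zero (Filter.Eventually.of_forall hmax)
  have hd : HasDerivAt (deriv f) (deriv (deriv f) a) a := (hf2d a).hasDerivAt
  have hslope := hasDerivAt_iff_tendsto_slope.mp hd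
  have hev : ∀ᶠ x in 𝓝[≠] a, 0 < slope (deriv f) a x :=
    hslope.eventually (eventually_gt_nhds hq)
  have hev' : ∀ᶠ x in 𝓝[>] a, 0 < slope (deriv f) a x :=
    hev.filter_mono (nhdsWithin_mono a (fun x hx => ne_of_gt hx))
  obtain ⟨b, hab, hb⟩ := (nhdsGT_basis a).eventually_iff.mp hev'
  have hmono : StrictMonoOn f (Icc a b) := by
    apply strictMonoOn_of_deriv_pos (convex_Icc a b) (hf1.continuous.continuousOn)
    intro x hx
    rw [interior_Icc] at hx
    have := hb hx
    rw [slope_def_field, h0, sub_zero] at this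
    have hxa : 0 < x - a := sub_pos.mpr hx.1
    have := mul_pos this hxa
    rw [div_mul_cancel₀] at this
    · exact this
    · exact ne_of_gt hxa
  have : f a < f b := hmono ⟨le_refl a, le_of_lt hab⟩ ⟨le_of_lt hab, le_refl b⟩ hab
  exact absurd (hmax b) (not_le.mpr this)

lemma secondDeriv_nonneg_at_min {f : ℝ → ℝ} (hf : ContDiff ℝ (⊤ : ℕ∞) f) {a : ℝ}
    (hmin : ∀ x, f a ≤ f x) : 0 ≤ deriv (deriv f) a := by
  have h := secondDeriv_nonpos_at_max (f := fun x => -f x) (hf.neg) (a := a)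
    (fun x => neg_le_neg (hmin x))
  have e1 : deriv (fun x => -f x) = fun x => -deriv f x := funext fun x => deriv.neg
  rw [e1] at h
  have e2 : deriv (fun x => -deriv f x) a = -deriv (deriv f) a := deriv.neg
  rw [e2] at h
  linarith

end Aux

/-- C⁰ estimate for the scalar flow: if `ρ(θ,t)` solves
`∂_t ρ = (φ'(ρ)√(1 + ρ_θ²φ(ρ)⁻²) - φ(ρ))/(κ - 1) - φ(ρ)` on `S¹ × [0,T)` with
strictly h-convex graph curves (`κ > 1`), then
`min_{S¹} ρ(·,0) ≤ ρ(·,t) ≤ max_{S¹} ρ(·,0)`. -/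
theorem C0_estimate_scalar_flow
    (ρ : ℝ → ℝ → ℝ) (T : ℝ) (hT : 0 < T)
    (hρ : ContDiff ℝ (⊤ : ℕ∞) (Function.uncurry ρ))
    (hper : ∀ θ t, ρ (θ + 2 * π) t = ρ θ t)
    (hρpos : ∀ θ t, 0 ≤ t → t < T → 0 < ρ θ t)
    (hconv : ∀ θ t, 0 ≤ t → t < T → 1 < curvκ ρ θ t)
    (hflow : ∀ θ t, 0 ≤ t → t < T →
      deriv (fun t' => ρ θ t') t
        = (Real.cosh (ρ θ t) * Real.sqrt (1 + (pTh ρ θ t) ^ 2 / Real.sinh (ρ θ t) ^ 2)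
            - Real.sinh (ρ θ t)) / (curvκ ρ θ t - 1) - Real.sinh (ρ θ t)) :
    ∀ θ t, 0 ≤ t → t < T →
      (⨅ θ', ρ θ' 0) ≤ ρ θ t ∧ ρ θ t ≤ (⨆ θ', ρ θ' 0) := by
  classical
  have h2π : (0:ℝ) < 2 * π := by positivity
  have hcρ : Continuous (Function.uncurry ρ) := hρ.continuous
  have hθsmooth : ∀ t, ContDiff ℝ (⊤ : ℕ∞) (fun θ' => ρ θ' t) := fun t =>
    hρ.comp (contDiff_id.prodMk contDiff_const)
  have htsmooth : ∀ θ, ContDiff ℝ (⊤ : ℕ∞) (fun t' => ρ θ t') := fun θ =>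
    hρ.comp (contDiff_const.prodMk contDiff_id)
  have hcθ : ∀ t, Continuous (fun θ' => ρ θ' t) := fun t => (hθsmooth t).continuous
  have hperi : ∀ t, Function.Periodic (fun θ' => ρ θ' t) (2 * π) := fun t θ => hper θ t
  have hK : ∀ θ t, ∃ θ' ∈ Set.Icc 0 (2 * π), ρ θ' t = ρ θ t := by
    intro θ t
    obtain ⟨y, hy, hyy⟩ := (hperi t).exists_mem_Ico₀ h2π θ
    exact ⟨y, Set.Ico_subset_Icc_self hy, hyy.symm⟩
  -- bounds on the initial data
  have hbddA : BddAbove (Set.range fun θ' => ρ θ' 0) := by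
    obtain ⟨C, hC⟩ := (isCompact_Icc.image (hcθ 0)).bddAbove
    refine ⟨C, ?_⟩
    rintro _ ⟨θ, rfl⟩
    obtain ⟨θ', hθ', he⟩ := hK θ 0
    show ρ θ 0 ≤ C
    rw [← he]
    exact hC ⟨θ', hθ', rfl⟩
  have hbddB : BddBelow (Set.range fun θ' => ρ θ' 0) := by
    obtain ⟨C, hC⟩ := (isCompact_Icc.image (hcθ 0)).bddBelow
    refine ⟨C, ?_⟩
    rintro _ ⟨θ, rfl⟩
    obtain ⟨θ', hθ', he⟩ := hK θ 0
    show C ≤ ρ θ 0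
    rw [← he]
    exact hC ⟨θ', hθ', rfl⟩
  set M0 := ⨆ θ', ρ θ' 0 with hM0def
  set m0 := ⨅ θ', ρ θ' 0 with hm0def
  have hM0 : ∀ θ, ρ θ 0 ≤ M0 := fun θ => le_ciSup hbddA θ
  have hm0 : ∀ θ, m0 ≤ ρ θ 0 := fun θ => ciInf_le hbddB θ
  -- the key perturbation estimates
  have upper : ∀ ε : ℝ, 0 < ε → ∀ θ t, 0 ≤ t → t < T → ρ θ t ≤ M0 + ε * (1 + t) := by
    intro ε hε θs ts hts0 htsT
    by_contra hcon
    push_neg at hcon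
    set A : Set (ℝ × ℝ) := (Set.Icc 0 (2 * π) ×ˢ Set.Icc 0 ts) ∩
      {p | M0 + ε ≤ ρ p.1 p.2 - ε * p.2} with hAdef
    have hAcomp : IsCompact A :=
      (isCompact_Icc.prod isCompact_Icc).inter_right
        (isClosed_le continuous_const (hcρ.sub (continuous_const.mul continuous_snd)))
    set S : Set ℝ := Prod.snd '' A with hSdef
    have hScomp : IsCompact S := hAcomp.image continuous_snd
    have hSne : S.Nonempty := by
      obtain ⟨θ', hθ', he⟩ := hK θs ts
      refine ⟨ts, ⟨(θ', ts), ⟨⟨hθ', ⟨hts0, le_refl ts⟩⟩, ?_⟩, rfl⟩⟩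
      simp only [Set.mem_setOf_eq, he]
      nlinarith
    have hSbdd : BddBelow S := hScomp.bddBelow
    set t₀ := sInf S with ht₀def
    have ht₀S : t₀ ∈ S := hScomp.isClosed.csInf_mem hSne hSbdd
    obtain ⟨⟨θ₁, t₁'⟩, ⟨⟨hθ₁K, ht₁I⟩, hA1⟩, ht₁e⟩ := ht₀S
    simp only at ht₁e
    subst ht₁e
    have ht₀0 : 0 ≤ t₀ := ht₁I.1
    have ht₀T : t₀ < T := lt_of_le_of_lt ht₁I.2 htsT
    have hwit : M0 + ε ≤ ρ θ₁ t₀ - ε * t₀ := hA1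
    have ht₀pos : 0 < t₀ := by
      rcases lt_or_eq_of_le ht₀0 with h | h
      · exact h
      · exfalso
        have := hM0 θ₁
        rw [← h] at hwit
        simp at hwit
        nlinarith
    have hbefore : ∀ t, 0 ≤ t → t < t₀ → ∀ θ, ρ θ t - ε * t < M0 + ε := by
      intro t h0t htt₀ θ
      by_contra hge
      push_neg at hge
      obtain ⟨θ', hθ', he⟩ := hK θ t
      have htS : t ∈ S := by
        refine ⟨(θ', t), ⟨⟨hθ', ⟨h0t, le_trans (le_of_lt htt₀) ht₁I.2⟩⟩, ?_⟩, rfl⟩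
        simp only [Set.mem_setOf_eq, he]
        linarith
      exact absurd (csInf_le hSbdd htS) (not_le.mpr htt₀)
    -- spatial maximum at time t₀
    obtain ⟨θ₀, hθ₀K, hθ₀max⟩ := isCompact_Icc.exists_isMaxOn
      (Set.nonempty_Icc.mpr (le_of_lt h2π)) (hcθ t₀).continuousOn
    have hmaxall : ∀ θ, ρ θ t₀ ≤ ρ θ₀ t₀ := by
      intro θ
      obtain ⟨θ', hθ', he⟩ := hK θ t₀
      exact he ▸ hθ₀max hθ'
    have hθ₀big : M0 + ε ≤ ρ θ₀ t₀ - ε * t₀ := le_trans hwit (by linarith [hmaxall θ₁])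
    -- spatial derivatives vanish / have a sign
    have hp : pTh ρ θ₀ t₀ = 0 :=
      IsLocalMax.deriv_eq_zero (Filter.Eventually.of_forall hmaxall)
    have hq : pThTh ρ θ₀ t₀ ≤ 0 :=
      secondDeriv_nonpos_at_max (hθsmooth t₀) hmaxall
    -- time derivative is at least ε
    have hu : Differentiable ℝ (fun t' => ρ θ₀ t') := (htsmooth θ₀).differentiable (by simp)
    have hd : HasDerivAt (fun t' => ρ θ₀ t') (deriv (fun t' => ρ θ₀ t') t₀) t₀ :=
      (hu t₀).hasDerivAt
    have hslope := hasDerivAt_iff_tendsto_slope.mp hd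
    have hevents : ∀ᶠ t in nhdsWithin t₀ (Set.Iio t₀),
        ε ≤ slope (fun t' => ρ θ₀ t') t₀ t := by
      filter_upwards [Ioo_mem_nhdsLT_of_mem (Set.mem_Ioc.mpr ⟨ht₀pos, le_refl t₀⟩)]
        with t ht
      have h1 : ρ θ₀ t - ε * t < M0 + ε := hbefore t (le_of_lt ht.1) ht.2 θ₀
      have h2 : ρ θ₀ t - ρ θ₀ t₀ ≤ ε * (t - t₀) := by nlinarith [hθ₀big]
      rw [slope_def_field, le_div_iff_of_neg (by linarith [ht.2] : t - t₀ < 0)]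
      exact h2
    have hderivge : ε ≤ deriv (fun t' => ρ θ₀ t') t₀ := by
      have hmono := hslope.mono_left
        (nhdsWithin_mono t₀ (fun x (hx : x ∈ Set.Iio t₀) => ne_of_lt hx))
      exact ge_of_tendsto hmono hevents
    -- but the flow equation forces the time derivative to be nonpositive
    set s := Real.sinh (ρ θ₀ t₀) with hsdef
    set c := Real.cosh (ρ θ₀ t₀) with hcdef
    have hs : 0 < s := Real.sinh_pos_iff.mpr (hρpos θ₀ t₀ ht₀0 ht₀T)
    have hκ1 : 1 < curvκ ρ θ₀ t₀ := hconv θ₀ t₀ ht₀0 ht₀T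
    have hden : (s ^ 2 + (0:ℝ) ^ 2) ^ ((3:ℝ)/2) = s ^ 3 := by
      rw [show (s ^ 2 + (0:ℝ) ^ 2) = s ^ (2:ℕ) by ring]
      rw [← Real.rpow_natCast s 2, ← Real.rpow_mul (le_of_lt hs)]
      norm_num
    have hκval : curvκ ρ θ₀ t₀ = (s ^ 2 * c - pThTh ρ θ₀ t₀ * s) / s ^ 3 := by
      rw [curvκ, hp, ← hsdef, ← hcdef, hden]
      ring_nf
    have hsk : c ≤ s * curvκ ρ θ₀ t₀ := by
      rw [hκval, mul_div_assoc']
      rw [le_div_iff₀ (by positivity : (0:ℝ) < s ^ 3)]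
      nlinarith [mul_nonneg (neg_nonneg.mpr hq) (sq_nonneg s)]
    have hfl := hflow θ₀ t₀ ht₀0 ht₀T
    rw [hp, ← hsdef, ← hcdef] at hfl
    have hsqrt : Real.sqrt (1 + (0:ℝ) ^ 2 / s ^ 2) = 1 := by
      norm_num
    rw [hsqrt, mul_one] at hfl
    have hderivle : deriv (fun t' => ρ θ₀ t') t₀ ≤ 0 := by
      rw [hfl]
      have h1 : (c - s) / (curvκ ρ θ₀ t₀ - 1) ≤ s := by
        rw [div_le_iff₀ (by linarith : 0 < curvκ ρ θ₀ t₀ - 1)]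
        have hx : s * (curvκ ρ θ₀ t₀ - 1) = s * curvκ ρ θ₀ t₀ - s := by ring
        linarith
      linarith
    linarith
  -- lower perturbation estimate
  have lower : ∀ ε : ℝ, 0 < ε → ∀ θ t, 0 ≤ t → t < T → m0 - ε * (1 + t) ≤ ρ θ t := by
    intro ε hε θs ts hts0 htsT
    by_contra hcon
    push_neg at hcon
    set A : Set (ℝ × ℝ) := (Set.Icc 0 (2 * π) ×ˢ Set.Icc 0 ts) ∩
      {p | ρ p.1 p.2 + ε * p.2 ≤ m0 - ε} with hAdef
    have hAcomp : IsCompact A :=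
      (isCompact_Icc.prod isCompact_Icc).inter_right
        (isClosed_le (hcρ.add (continuous_const.mul continuous_snd)) continuous_const)
    set S : Set ℝ := Prod.snd '' A with hSdef
    have hScomp : IsCompact S := hAcomp.image continuous_snd
    have hSne : S.Nonempty := by
      obtain ⟨θ', hθ', he⟩ := hK θs ts
      refine ⟨ts, ⟨(θ', ts), ⟨⟨hθ', ⟨hts0, le_refl ts⟩⟩, ?_⟩, rfl⟩⟩
      simp only [Set.mem_setOf_eq, he]
      nlinarith
    have hSbdd : BddBelow S := hScomp.bddBelow
    set t₀ := sInf S with ht₀def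
    have ht₀S : t₀ ∈ S := hScomp.isClosed.csInf_mem hSne hSbdd
    obtain ⟨⟨θ₁, t₁'⟩, ⟨⟨hθ₁K, ht₁I⟩, hA1⟩, ht₁e⟩ := ht₀S
    simp only at ht₁e
    subst ht₁e
    have ht₀0 : 0 ≤ t₀ := ht₁I.1
    have ht₀T : t₀ < T := lt_of_le_of_lt ht₁I.2 htsT
    have hwit : ρ θ₁ t₀ + ε * t₀ ≤ m0 - ε := hA1
    have ht₀pos : 0 < t₀ := by
      rcases lt_or_eq_of_le ht₀0 with h | h
      · exact h
      · exfalso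
        have := hm0 θ₁
        rw [← h] at hwit
        simp at hwit
        nlinarith
    have hbefore : ∀ t, 0 ≤ t → t < t₀ → ∀ θ, m0 - ε < ρ θ t + ε * t := by
      intro t h0t htt₀ θ
      by_contra hge
      push_neg at hge
      obtain ⟨θ', hθ', he⟩ := hK θ t
      have htS : t ∈ S := by
        refine ⟨(θ', t), ⟨⟨hθ', ⟨h0t, le_trans (le_of_lt htt₀) ht₁I.2⟩⟩, ?_⟩, rfl⟩
        simp only [Set.mem_setOf_eq, he]
        linarith
      exact absurd (csInf_le hSbdd htS) (not_le.mpr htt₀)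
    -- spatial minimum at time t₀
    obtain ⟨θ₀, hθ₀K, hθ₀min⟩ := isCompact_Icc.exists_isMinOn
      (Set.nonempty_Icc.mpr (le_of_lt h2π)) (hcθ t₀).continuousOn
    have hminall : ∀ θ, ρ θ₀ t₀ ≤ ρ θ t₀ := by
      intro θ
      obtain ⟨θ', hθ', he⟩ := hK θ t₀
      exact he ▸ hθ₀min hθ'
    have hθ₀big : ρ θ₀ t₀ + ε * t₀ ≤ m0 - ε := le_trans (by linarith [hminall θ₁]) hwit
    have hp : pTh ρ θ₀ t₀ = 0 :=
      IsLocalMin.deriv_eq_zero (Filter.Eventually.of_forall hminall)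
    have hq : 0 ≤ pThTh ρ θ₀ t₀ :=
      secondDeriv_nonneg_at_min (hθsmooth t₀) hminall
    have hu : Differentiable ℝ (fun t' => ρ θ₀ t') := (htsmooth θ₀).differentiable (by simp)
    have hd : HasDerivAt (fun t' => ρ θ₀ t') (deriv (fun t' => ρ θ₀ t') t₀) t₀ :=
      (hu t₀).hasDerivAt
    have hslope := hasDerivAt_iff_tendsto_slope.mp hd
    have hevents : ∀ᶠ t in nhdsWithin t₀ (Set.Iio t₀),
        slope (fun t' => ρ θ₀ t') t₀ t ≤ -ε := by
      filter_upwards [Ioo_mem_nhdsLT_of_mem (Set.mem_Ioc.mpr ⟨ht₀pos, le_refl t₀⟩)]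
        with t ht
      have h1 : m0 - ε < ρ θ₀ t + ε * t := hbefore t (le_of_lt ht.1) ht.2 θ₀
      have h2 : -ε * (t - t₀) ≤ ρ θ₀ t - ρ θ₀ t₀ := by nlinarith [hθ₀big]
      rw [slope_def_field, div_le_iff_of_neg (by linarith [ht.2] : t - t₀ < 0)]
      linarith
    have hderivle : deriv (fun t' => ρ θ₀ t') t₀ ≤ -ε := by
      have hmono := hslope.mono_left
        (nhdsWithin_mono t₀ (fun x (hx : x ∈ Set.Iio t₀) => ne_of_lt hx))
      exact le_of_tendsto hmono hevents
    set s := Real.sinh (ρ θ₀ t₀) with hsdef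
    set c := Real.cosh (ρ θ₀ t₀) with hcdef
    have hs : 0 < s := Real.sinh_pos_iff.mpr (hρpos θ₀ t₀ ht₀0 ht₀T)
    have hκ1 : 1 < curvκ ρ θ₀ t₀ := hconv θ₀ t₀ ht₀0 ht₀T
    have hden : (s ^ 2 + (0:ℝ) ^ 2) ^ ((3:ℝ)/2) = s ^ 3 := by
      rw [show (s ^ 2 + (0:ℝ) ^ 2) = s ^ (2:ℕ) by ring]
      rw [← Real.rpow_natCast s 2, ← Real.rpow_mul (le_of_lt hs)]
      norm_num
    have hκval : curvκ ρ θ₀ t₀ = (s ^ 2 * c - pThTh ρ θ₀ t₀ * s) / s ^ 3 := by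
      rw [curvκ, hp, ← hsdef, ← hcdef, hden]
      ring_nf
    have hsk : s * curvκ ρ θ₀ t₀ ≤ c := by
      rw [hκval, mul_div_assoc']
      rw [div_le_iff₀ (by positivity : (0:ℝ) < s ^ 3)]
      nlinarith [mul_nonneg hq (sq_nonneg s)]
    have hfl := hflow θ₀ t₀ ht₀0 ht₀T
    rw [hp, ← hsdef, ← hcdef] at hfl
    have hsqrt : Real.sqrt (1 + (0:ℝ) ^ 2 / s ^ 2) = 1 := by
      norm_num
    rw [hsqrt, mul_one] at hfl
    have hderivge : 0 ≤ deriv (fun t' => ρ θ₀ t') t₀ := by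
      rw [hfl]
      have h1 : s ≤ (c - s) / (curvκ ρ θ₀ t₀ - 1) := by
        rw [le_div_iff₀ (by linarith : 0 < curvκ ρ θ₀ t₀ - 1)]
        have hx : s * (curvκ ρ θ₀ t₀ - 1) = s * curvκ ρ θ₀ t₀ - s := by ring
        linarith
      linarith
    linarith
  -- conclude
  intro θ t ht0 htT
  have h1t : (0:ℝ) < 1 + t := by linarith
  constructor
  · by_contra h
    push_neg at h
    have hεpos : 0 < (m0 - ρ θ t) / (2 * (1 + t)) := div_pos (by linarith) (by linarith)
    have := lower _ hεpos θ t ht0 htT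
    have he : (m0 - ρ θ t) / (2 * (1 + t)) * (1 + t) = (m0 - ρ θ t) / 2 := by
      field_simp
    rw [he] at this
    linarith
  · by_contra h
    push_neg at h
    have hεpos : 0 < (ρ θ t - M0) / (2 * (1 + t)) := div_pos (by linarith) (by linarith)
    have := upper _ hεpos θ t ht0 htT
    have he : (ρ θ t - M0) / (2 * (1 + t)) * (1 + t) = (ρ θ t - M0) / 2 := by
      field_simp
    rw [he] at this
    linarith
end

section
/- Hausdorff-distance estimate via L² bound: if a strictly h-convex closed curve γ = {(ρ(θ),θ)} in ℍ² satisfies ∫_{S¹}|ρ − a|² dθ ≤ C₀√ε, where a = (1/(2π))∫_{S¹} ρ dθ, and |ρ_θ| ≤ M, then max{max ρ − a, a − min ρ} ≤ C₁ ε^{1/6} for a constant C₁ depending only on C₀ and M, and hence the Hausdorff distance from γ to the geodesic circle of radius a centered at the origin is at most C ε^{1/6}. -/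
open Real

/-- Hausdorff-distance estimate via an L² bound: there is a constant
`C₁ > 0` depending only on `C₀` and `M` such that: if a strictly h-convex closed curve
`γ = {(ρ(θ),θ)}` in `ℍ²` (a graph over `S¹` with `|ρ_θ| ≤ M`) satisfies
`∫_{S¹} |ρ - a|² dθ ≤ C₀ √ε`, where `a = (1/(2π)) ∫_{S¹} ρ dθ`, then
`max{max ρ - a, a - min ρ} ≤ C₁ ε^{1/6}` — i.e. `|ρ(θ) - a| ≤ C₁ ε^{1/6}` for all `θ` —
and hence the Hausdorff distance from `γ` to the geodesic circle of radius `a` centered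
at the origin is at most `C₁ ε^{1/6}`. -/
theorem stability_L2_to_Hausdorff (C₀ M : ℝ) (hC₀ : 0 < C₀) (hM : 0 < M) :
    ∃ C₁ : ℝ, 0 < C₁ ∧
      ∀ (ρ : ℝ → ℝ) (ε : ℝ), 0 < ε →
        ContDiff ℝ (⊤ : ℕ∞) ρ →
        (∀ θ, ρ (θ + 2 * π) = ρ θ) →
        (∀ θ, 0 < ρ θ) →
        (∀ θ, |deriv ρ θ| ≤ M) →
        (∫ θ in (0 : ℝ)..(2 * π),
            (ρ θ - (1 / (2 * π)) * ∫ θ' in (0 : ℝ)..(2 * π), ρ θ') ^ 2)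
          ≤ C₀ * Real.sqrt ε →
        ∀ θ, |ρ θ - (1 / (2 * π)) * ∫ θ' in (0 : ℝ)..(2 * π), ρ θ'|
          ≤ C₁ * ε ^ ((1 : ℝ) / 6) := by
  have hK : (0:ℝ) < 8 * M * C₀ := by positivity
  refine ⟨(8 * M * C₀) ^ ((1:ℝ)/3), by positivity, ?_⟩
  intro ρ ε hε hsm hper hpos hderiv hL2 θ
  have hπ : (0:ℝ) < π := Real.pi_pos
  have h2π : (0:ℝ) < 2 * π := by positivity
  set a : ℝ := (1 / (2 * π)) * ∫ θ' in (0 : ℝ)..(2 * π), ρ θ' with ha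
  have hρc : Continuous ρ := hsm.continuous
  have hρd : ∀ x : ℝ, DifferentiableAt ℝ ρ x := fun x =>
    (hsm.differentiable (by simp)).differentiableAt
  -- Lipschitz bound
  have hlip : ∀ x y : ℝ, |ρ y - ρ x| ≤ M * |y - x| := by
    intro x y
    have := Convex.norm_image_sub_le_of_norm_deriv_le (s := (Set.univ : Set ℝ))
      (fun z _ => hρd z) (fun z _ => by simpa using hderiv z) convex_univ
      (Set.mem_univ x) (Set.mem_univ y)
    simpa [Real.norm_eq_abs] using this
  -- periodicity
  have hPer : Function.Periodic ρ (2 * π) := hper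
  -- a lies between min and max of ρ on [0, 2π]
  obtain ⟨θm, hθm, hminOn⟩ := isCompact_Icc.exists_isMinOn (Set.nonempty_Icc.2 h2π.le)
    hρc.continuousOn
  obtain ⟨θM, hθM, hmaxOn⟩ := isCompact_Icc.exists_isMaxOn (Set.nonempty_Icc.2 h2π.le)
    hρc.continuousOn
  have hint : ∀ b c : ℝ, IntervalIntegrable ρ MeasureTheory.volume b c :=
    fun b c => hρc.intervalIntegrable b c
  have hmin_le_a : ρ θm ≤ a := by
    have h1 : ∫ θ' in (0:ℝ)..(2*π), ρ θm ≤ ∫ θ' in (0:ℝ)..(2*π), ρ θ' := by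
      apply intervalIntegral.integral_mono_on h2π.le (by
        exact intervalIntegrable_const) (hint 0 (2*π))
      intro x hx; exact hminOn hx
    rw [intervalIntegral.integral_const] at h1
    simp only [smul_eq_mul, sub_zero] at h1
    calc ρ θm = (1/(2*π)) * (2*π * ρ θm) := by field_simp
      _ ≤ (1/(2*π)) * ∫ θ' in (0:ℝ)..(2*π), ρ θ' :=
          mul_le_mul_of_nonneg_left h1 (by positivity)
  have ha_le_max : a ≤ ρ θM := by
    have h1 : ∫ θ' in (0:ℝ)..(2*π), ρ θ' ≤ ∫ θ' in (0:ℝ)..(2*π), ρ θM := by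
      apply intervalIntegral.integral_mono_on h2π.le (hint 0 (2*π)) (by
        exact intervalIntegrable_const)
      intro x hx; exact hmaxOn hx
    rw [intervalIntegral.integral_const] at h1
    simp only [smul_eq_mul, sub_zero] at h1
    calc a = (1/(2*π)) * ∫ θ' in (0:ℝ)..(2*π), ρ θ' := rfl
      _ ≤ (1/(2*π)) * (2*π * ρ θM) :=
          mul_le_mul_of_nonneg_left h1 (by positivity)
      _ = ρ θM := by field_simp
  -- a priori bound |ρ x - a| ≤ 2πM for every x
  have hapriori : ∀ x : ℝ, |ρ x - a| ≤ 2 * π * M := by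
    intro x
    set x' : ℝ := x - ⌊x / (2*π)⌋ * (2*π) with hx'
    have hρx : ρ x' = ρ x := hPer.sub_int_mul_eq _
    have hx'mem : x' ∈ Set.Icc (0:ℝ) (2*π) := by
      have hfl := Int.floor_le (x / (2*π))
      have hfu := Int.lt_floor_add_one (x / (2*π))
      have hdm : x / (2*π) * (2*π) = x := div_mul_cancel₀ x (ne_of_gt h2π)
      constructor
      · have := mul_le_mul_of_nonneg_right hfl h2π.le
        rw [hdm] at this
        rw [hx']; linarith
      · have := mul_lt_mul_of_pos_right hfu h2π
        rw [hdm] at this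
        rw [hx']; nlinarith
    rw [← hρx]
    rw [abs_le]
    constructor
    · have h1 : ρ θM - ρ x' ≤ M * |θM - x'| := (le_abs_self _).trans (hlip x' θM)
      have h2 : |θM - x'| ≤ 2 * π := by
        rw [abs_le]
        exact ⟨by linarith [hθM.1, hθM.2, hx'mem.1, hx'mem.2], by linarith [hθM.1, hθM.2, hx'mem.1, hx'mem.2]⟩
      nlinarith [ha_le_max, mul_le_mul_of_nonneg_left h2 hM.le]
    · have h1 : ρ x' - ρ θm ≤ M * |x' - θm| := (le_abs_self _).trans (hlip θm x')
      have h2 : |x' - θm| ≤ 2 * π := by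
        rw [abs_le]
        exact ⟨by linarith [hθm.1, hθm.2, hx'mem.1, hx'mem.2], by linarith [hθm.1, hθm.2, hx'mem.1, hx'mem.2]⟩
      nlinarith [hmin_le_a, mul_le_mul_of_nonneg_left h2 hM.le]
  -- main estimate
  set d : ℝ := |ρ θ - a| with hd
  have hd0 : 0 ≤ d := abs_nonneg _
  have hd2πM : d ≤ 2 * π * M := hapriori θ
  set δ : ℝ := d / (2 * M) with hδ
  have hδ0 : 0 ≤ δ := by positivity
  have hδπ : δ ≤ π := by rw [hδ, div_le_iff₀ (by positivity)]; nlinarith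
  -- pointwise lower bound on [θ, θ+δ]
  have hptwise : ∀ x ∈ Set.Icc θ (θ + δ), (d/2)^2 ≤ (ρ x - a)^2 := by
    intro x hx
    have h1 : |ρ x - ρ θ| ≤ M * δ := by
      have := hlip θ x
      have h2 : |x - θ| ≤ δ := by
        rw [abs_le]; constructor <;> [linarith [hx.1]; linarith [hx.2]]
      calc |ρ x - ρ θ| ≤ M * |x - θ| := this
        _ ≤ M * δ := by nlinarith
    have h3 : d / 2 ≤ |ρ x - a| := by
      have h4 : d ≤ |ρ x - a| + |ρ x - ρ θ| := by
        calc d = |ρ θ - a| := rfl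
          _ ≤ |ρ θ - ρ x| + |ρ x - a| := by
              have := abs_sub_le (ρ θ) (ρ x) a; linarith
          _ = |ρ x - a| + |ρ x - ρ θ| := by rw [abs_sub_comm (ρ θ) (ρ x)]; ring
      have hMδ : M * δ = d / 2 := by rw [hδ]; field_simp
      nlinarith
    calc (d/2)^2 ≤ |ρ x - a|^2 := by
          apply pow_le_pow_left₀ (by positivity) h3
      _ = (ρ x - a)^2 := sq_abs _
  -- the squared deviation is continuous and periodic
  have hgc : Continuous fun x => (ρ x - a)^2 := (hρc.sub continuous_const).pow 2
  have hgper : Function.Periodic (fun x => (ρ x - a)^2) (2*π) := by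
    intro x; simp [hper x]
  -- integral over [θ, θ+δ]
  have hstep1 : δ * (d/2)^2 ≤ ∫ x in θ..(θ+δ), (ρ x - a)^2 := by
    have := intervalIntegral.integral_mono_on (a := θ) (b := θ + δ)
      (f := fun _ => (d/2)^2) (g := fun x => (ρ x - a)^2)
      (by linarith) (intervalIntegrable_const (μ := MeasureTheory.volume)) (hgc.intervalIntegrable _ _) hptwise
    rwa [intervalIntegral.integral_const, smul_eq_mul, add_sub_cancel_left] at this
  have hstep2 : (∫ x in θ..(θ+δ), (ρ x - a)^2) ≤ ∫ x in θ..(θ + 2*π), (ρ x - a)^2 := by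
    have hsplit : (∫ x in θ..(θ+δ), (ρ x - a)^2) + (∫ x in (θ+δ)..(θ+2*π), (ρ x - a)^2)
        = ∫ x in θ..(θ+2*π), (ρ x - a)^2 :=
      intervalIntegral.integral_add_adjacent_intervals
        (hgc.intervalIntegrable _ _) (hgc.intervalIntegrable _ _)
    have hnn : 0 ≤ ∫ x in (θ+δ)..(θ+2*π), (ρ x - a)^2 := by
      apply intervalIntegral.integral_nonneg (by linarith)
      intro x _; positivity
    linarith
  have hstep3 : (∫ x in θ..(θ + 2*π), (ρ x - a)^2) = ∫ x in (0:ℝ)..(2*π), (ρ x - a)^2 := by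
    have := hgper.intervalIntegral_add_eq θ 0
    simpa using this
  have hchain : δ * (d/2)^2 ≤ C₀ * Real.sqrt ε := by
    calc δ * (d/2)^2 ≤ ∫ x in θ..(θ+δ), (ρ x - a)^2 := hstep1
      _ ≤ ∫ x in θ..(θ + 2*π), (ρ x - a)^2 := hstep2
      _ = ∫ x in (0:ℝ)..(2*π), (ρ x - a)^2 := hstep3
      _ ≤ C₀ * Real.sqrt ε := hL2
  -- so d^3 ≤ 8 M C₀ √ε
  have hcube : d ^ 3 ≤ 8 * M * C₀ * Real.sqrt ε := by
    have hδd : δ * (d/2)^2 = d^3 / (8*M) := by rw [hδ]; field_simp; ring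
    rw [hδd] at hchain
    rw [div_le_iff₀ (by positivity)] at hchain
    nlinarith [hchain]
  -- conclude via cube roots
  have hrhs : ((8 * M * C₀) ^ ((1:ℝ)/3) * ε ^ ((1:ℝ)/6)) ^ 3
      = 8 * M * C₀ * Real.sqrt ε := by
    rw [mul_pow, ← Real.rpow_natCast ((8*M*C₀) ^ ((1:ℝ)/3)) 3,
      ← Real.rpow_natCast (ε ^ ((1:ℝ)/6)) 3,
      ← Real.rpow_mul hK.le, ← Real.rpow_mul hε.le, Real.sqrt_eq_rpow]
    norm_num
  have : d ^ 3 ≤ ((8 * M * C₀) ^ ((1:ℝ)/3) * ε ^ ((1:ℝ)/6)) ^ 3 := by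
    rw [hrhs]; exact hcube
  exact le_of_pow_le_pow_left₀ (by norm_num) (by positivity) this
end
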